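/- arXiv:2505.03287 — 8 statements merged into one kernel-verified Lean document; each statement's English description precedes it below -/
import Mathlib

section
/- Let A be a unital C*-algebra and let a, b be positive norm-one elements of A. Then ‖a − b‖ = 1 if and only if there exists a pure state ω on A such that {ω(a), ω(b)} = {0, 1}. -/
open scoped ComplexOrder

variable {A : Type*} [CStarAlgebra A] [PartialOrder A] [StarOrderedRing A]

/-- A state on a unital C*-algebra: a positive linear functional of norm one. -/
def IsState (ω : A →L[ℂ] ℂ) : Prop :=
  (∀ a : A, 0 ≤ a → 0 ≤ ω a) ∧ ‖ω‖ = 1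

/-- A pure state: an extreme point of the state space. -/
def IsPureState (ω : A →L[ℂ] ℂ) : Prop :=
  ω ∈ Set.extremePoints ℝ {φ : A →L[ℂ] ℂ | IsState φ}

/-! If `{ω a, ω b} = {0, 1}` then `1 = ‖ω (a - b)‖ ≤ ‖a - b‖ ≤ 1`. Conversely, if `‖a - b‖ = 1`
then, after possibly swapping `a` and `b`, `1` lies in the spectrum of `a - b`. A character of the
commutative C⋆-algebra generated by `a - b`, extended by Hahn–Banach, is a unital functional of
norm one, hence a state, with value `1` at `a - b`. Evaluation at `a - b` maps the weak-⋆ compact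
convex set of positive functionals of norm `≤ 1` into the unit disc, and `1` is an extreme point
of the disc attained by that state; by Krein–Milman its fibre contains an extreme point `ω`, which
is then a pure state with `ω a - ω b = 1`. As `0 ≤ ω a, ω b ≤ 1`, this forces `ω a = 1` and
`ω b = 0`. -/

section Unital

variable {B : Type*} [CStarAlgebra B]

lemma IsSelfAdjoint.norm_add_algebraMap_mul_I_sq_le [Nontrivial B] {x : B}
    (hx : IsSelfAdjoint x) (t : ℝ) :
    ‖x + algebraMap ℂ B (t * Complex.I)‖ ^ 2 ≤ ‖x‖ ^ 2 + t ^ 2 := by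
  set u := algebraMap ℂ B (t * Complex.I)
  have hu : star u = -u := by
    rw [← algebraMap_star_comm, ← map_neg]
    simp [Complex.conj_ofReal]
  have huu : u * u = -algebraMap ℝ B (t ^ 2) := by
    rw [← map_mul, IsScalarTower.algebraMap_apply ℝ ℂ B, ← map_neg]
    congr 1
    push_cast
    ring_nf
    simp
  have hstar : star (x + u) * (x + u) = x * x + algebraMap ℝ B (t ^ 2) := by
    rw [star_add, hx.star_eq, hu, ← sub_eq_add_neg, sub_mul, mul_add, mul_add,
      ← Algebra.commutes, huu]
    abel
  calc ‖x + u‖ ^ 2 = ‖x * x + algebraMap ℝ B (t ^ 2)‖ := by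
        rw [← hstar, CStarRing.norm_star_mul_self, sq]
    _ ≤ ‖x‖ ^ 2 + t ^ 2 := by
      grw [norm_add_le, norm_mul_le, norm_algebraMap', Real.norm_of_nonneg (sq_nonneg t), ← sq]

namespace ContinuousLinearMap

variable {φ : B →L[ℂ] ℂ}

lemma apply_algebraMap_of_apply_one (h1 : φ 1 = 1) (z : ℂ) : φ (algebraMap ℂ B z) = z := by
  rw [Algebra.algebraMap_eq_smul_one, map_smul, h1, smul_eq_mul, mul_one]

lemma im_apply_eq_zero_of_isSelfAdjoint (hφ : ‖φ‖ ≤ 1) (h1 : φ 1 = 1) {x : B}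
    (hx : IsSelfAdjoint x) : (φ x).im = 0 := by
  have : Nontrivial B := ⟨1, 0, fun h ↦ by simp [h] at h1⟩
  have key (t : ℝ) : 2 * t * (φ x).im ≤ ‖x‖ ^ 2 := by
    have : ‖φ x + t * Complex.I‖ ^ 2 ≤ ‖x‖ ^ 2 + t ^ 2 := by
      rw [← apply_algebraMap_of_apply_one h1 (t * Complex.I), ← map_add]
      refine le_trans ?_ (hx.norm_add_algebraMap_mul_I_sq_le t)
      gcongr
      exact φ.le_of_opNorm_le hφ _ |>.trans_eq (one_mul _)
    rw [Complex.sq_norm, Complex.normSq_apply] at this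
    simp only [Complex.add_re, Complex.mul_re, Complex.ofReal_re, Complex.I_re, Complex.ofReal_im,
      Complex.I_im, Complex.add_im, Complex.mul_im] at this
    nlinarith [sq_nonneg (φ x).re, sq_nonneg (φ x).im]
  by_contra h
  have := key ((‖x‖ ^ 2 + 1) / (2 * (φ x).im))
  field_simp at this
  linarith

end ContinuousLinearMap

lemma exists_norm_le_one_apply_eq_of_mem_spectrum {c : B} [IsStarNormal c] {z : ℂ}
    (hz : z ∈ spectrum ℂ c) : ∃ φ : B →L[ℂ] ℂ, ‖φ‖ ≤ 1 ∧ φ 1 = 1 ∧ φ c = z := by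
  obtain _ | _ := subsingleton_or_nontrivial B
  · simp [spectrum.of_subsingleton] at hz
  obtain ⟨χ, hχ⟩ := (StarAlgebra.elemental.bijective_characterSpaceToSpectrum c).2 ⟨z, hz⟩
  obtain ⟨φ, hφ, hφ_norm⟩ := exists_extension_norm_eq
    (StarAlgebra.elemental ℂ c).toSubalgebra.toSubmodule (WeakDual.toStrongDual (χ : WeakDual ℂ _))
  refine ⟨φ, ?_, ?_, ?_⟩
  · rw [hφ_norm]
    exact (WeakDual.CharacterSpace.norm_le_norm_one χ).trans_eq norm_one
  · exact (hφ ⟨1, (StarAlgebra.elemental ℂ c).one_mem⟩).trans (map_one χ)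
  · exact (hφ ⟨c, StarAlgebra.elemental.self_mem ℂ c⟩).trans (congrArg Subtype.val hχ)

end Unital

section States

variable {B : Type*} [CStarAlgebra B] [PartialOrder B]

lemma IsState.norm_apply_le {ω : B →L[ℂ] ℂ} (hω : IsState ω) (x : B) : ‖ω x‖ ≤ ‖x‖ :=
  ω.le_of_opNorm_le hω.2.le x |>.trans_eq (one_mul _)

lemma IsState.apply_eq_one_and_apply_eq_zero {ω : B →L[ℂ] ℂ} (hω : IsState ω) {x y : B}
    (hx : 0 ≤ x) (hy : 0 ≤ y) (hx1 : ‖x‖ ≤ 1) (h : ω (x - y) = 1) : ω x = 1 ∧ ω y = 0 := by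
  have hxy : ω x = 1 + ω y := by rwa [map_sub, sub_eq_iff_eq_add] at h
  have hx_re : (ω x).re ≤ 1 :=
    (Complex.re_eq_norm.2 (hω.1 x hx)).trans_le ((hω.norm_apply_le x).trans hx1)
  obtain ⟨hy_re, hy_im⟩ := Complex.nonneg_iff.1 (hω.1 y hy)
  have hy0 : ω y = 0 := by
    refine Complex.ext ?_ hy_im.symm
    have := congrArg Complex.re hxy
    simp only [Complex.add_re, Complex.one_re] at this
    simp only [Complex.zero_re]
    linarith
  exact ⟨by rw [hxy, hy0, add_zero], hy0⟩

end States

section StarOrdered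

variable {B : Type*} [CStarAlgebra B] [PartialOrder B] [StarOrderedRing B]

lemma IsSelfAdjoint.norm_le_of_neg_le_of_le {x : B} {r : ℝ} (hx : IsSelfAdjoint x) (hr : 0 ≤ r)
    (h₁ : -algebraMap ℝ B r ≤ x) (h₂ : x ≤ algebraMap ℝ B r) : ‖x‖ ≤ r := by
  obtain _ | _ := subsingleton_or_nontrivial B
  · simp [Subsingleton.elim x 0, hr]
  rw [← map_neg] at h₁
  obtain h | h := CStarAlgebra.norm_or_neg_norm_mem_spectrum hx
  · exact (le_algebraMap_iff_spectrum_le hx).1 h₂ _ h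
  · linarith [(algebraMap_le_iff_le_spectrum hx).1 h₁ _ h]

lemma norm_sub_le_one_of_nonneg {a b : B} (ha : 0 ≤ a) (hb : 0 ≤ b) (ha1 : ‖a‖ ≤ 1)
    (hb1 : ‖b‖ ≤ 1) : ‖a - b‖ ≤ 1 := by
  have ha1' := (CStarAlgebra.norm_le_one_iff_of_nonneg a ha).1 ha1
  have hb1' := (CStarAlgebra.norm_le_one_iff_of_nonneg b hb).1 hb1
  refine (IsSelfAdjoint.of_nonneg ha |>.sub (.of_nonneg hb)).norm_le_of_neg_le_of_le zero_le_one
    ?_ ?_ <;> rw [map_one]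
  · calc -1 ≤ -b := neg_le_neg hb1'
      _ ≤ a - b := by simpa [neg_add_eq_sub] using add_le_add_right ha (-b)
  · calc a - b ≤ a := sub_le_self a hb
      _ ≤ 1 := ha1'

lemma ContinuousLinearMap.apply_nonneg_of_norm_le_one {φ : B →L[ℂ] ℂ} (hφ : ‖φ‖ ≤ 1)
    (h1 : φ 1 = 1) {a : B} (ha : 0 ≤ a) : 0 ≤ φ a := by
  set t := ‖a‖
  have hy : ‖algebraMap ℝ B t - a‖ ≤ t :=
    (CStarAlgebra.norm_le_iff_le_algebraMap _ (norm_nonneg a)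
      (sub_nonneg.2 (IsSelfAdjoint.of_nonneg ha).le_algebraMap_norm_self)).2 (sub_le_self _ ha)
  have hre : t - (φ a).re ≤ t :=
    calc t - (φ a).re = (φ (algebraMap ℝ B t - a)).re := by
          rw [map_sub, IsScalarTower.algebraMap_apply ℝ ℂ B, apply_algebraMap_of_apply_one h1]
          simp
      _ ≤ ‖φ (algebraMap ℝ B t - a)‖ := Complex.re_le_norm _
      _ ≤ t := (φ.le_of_opNorm_le hφ _).trans (by rw [one_mul]; exact hy)
  exact Complex.nonneg_iff.2
    ⟨by linarith, (im_apply_eq_zero_of_isSelfAdjoint hφ h1 (.of_nonneg ha)).symm⟩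

lemma isState_of_norm_le_one_of_apply_one {φ : B →L[ℂ] ℂ} (hφ : ‖φ‖ ≤ 1) (h1 : φ 1 = 1) :
    IsState φ := by
  have : Nontrivial B := ⟨1, 0, fun h ↦ by simp [h] at h1⟩
  refine ⟨fun a ha ↦ φ.apply_nonneg_of_norm_le_one hφ h1 ha, le_antisymm hφ ?_⟩
  simpa [h1] using φ.le_opNorm 1

end StarOrdered

section WeakDual

open WeakDual

variable {E : Type*} [NormedAddCommGroup E] [NormedSpace ℂ E]

instance : LocallyConvexSpace ℝ (WeakDual ℂ E) := WeakBilin.locallyConvexSpace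

lemma WeakDual.extremePoints_preimage_toStrongDual (s : Set (E →L[ℂ] ℂ)) :
    Set.extremePoints ℝ (toStrongDual ⁻¹' s) = toStrongDual ⁻¹' Set.extremePoints ℝ s :=
  rfl

lemma WeakDual.isCompact_closedBall_inter_setOf_nonneg [LE E] :
    IsCompact (toStrongDual ⁻¹' Metric.closedBall (0 : E →L[ℂ] ℂ) 1 ∩
      {φ : WeakDual ℂ E | ∀ a : E, 0 ≤ a → 0 ≤ φ a}) := by
  refine (isCompact_closedBall (0 : E →L[ℂ] ℂ) 1).inter_right ?_
  simp only [Set.ofPred_forall]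
  exact isClosed_iInter fun a ↦ isClosed_iInter fun _ ↦ isClosed_Ici.preimage (eval_continuous a)

end WeakDual

section PureStates

open WeakDual

variable {B : Type*} [CStarAlgebra B] [PartialOrder B]

lemma exists_isPureState_apply_eq_one {c : B} (hc : ‖c‖ ≤ 1) {φ : B →L[ℂ] ℂ} (hφ : IsState φ)
    (hφc : φ c = 1) : ∃ ω : B →L[ℂ] ℂ, IsPureState ω ∧ ω c = 1 := by
  set K := toStrongDual ⁻¹' Metric.closedBall (0 : B →L[ℂ] ℂ) 1 ∩
    {φ : WeakDual ℂ B | ∀ a : B, 0 ≤ a → 0 ≤ φ a}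
  let f : WeakDual ℂ B →ᴬ[ℝ] ℂ :=
    ((WeakBilin.eval (topDualPairing ℂ B) c).restrictScalars ℝ).toContinuousAffineMap
  have hfK : f '' K ⊆ Metric.closedBall 0 1 := by
    rintro _ ⟨ψ, ⟨hψ, -⟩, rfl⟩
    rw [Set.mem_preimage, mem_closedBall_zero_iff] at hψ
    exact mem_closedBall_zero_iff.2 <|
      ((ψ.le_of_opNorm_le hψ c).trans_eq (one_mul _)).trans hc
  have h1 : (1 : ℂ) ∈ Set.extremePoints ℝ (f '' K) :=
    inter_extremePoints_subset_extremePoints_of_subset hfK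
      ⟨⟨φ, ⟨mem_closedBall_zero_iff.2 hφ.2.le, hφ.1⟩, hφc⟩,
        StrictConvexSpace.sphere_subset_extremePoints_closedBall 0 one_ne_zero (by simp)⟩
  obtain ⟨ω, hω, hωc : ω c = 1⟩ :=
    surjOn_extremePoints_image f isCompact_closedBall_inter_setOf_nonneg h1
  have hω_state : IsState (toStrongDual ω) := by
    refine ⟨hω.1.2, le_antisymm (mem_closedBall_zero_iff.1 hω.1.1) ?_⟩
    simpa [hωc] using (toStrongDual ω).le_opNorm c |>.trans
      (mul_le_of_le_one_right (norm_nonneg _) hc)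
  refine ⟨toStrongDual ω, ?_, hωc⟩
  have hSK : toStrongDual ⁻¹' {φ | IsState φ} ⊆ K :=
    fun ψ hψ ↦ ⟨mem_closedBall_zero_iff.2 hψ.2.le, hψ.1⟩
  rw [IsPureState, ← Set.mem_preimage, ← extremePoints_preimage_toStrongDual]
  exact inter_extremePoints_subset_extremePoints_of_subset hSK ⟨hω_state, hω⟩

lemma exists_isPureState_of_one_mem_spectrum_sub [StarOrderedRing B] {x y : B} (hx : 0 ≤ x)
    (hy : 0 ≤ y) (hx1 : ‖x‖ ≤ 1) (hy1 : ‖y‖ ≤ 1) (h : (1 : ℝ) ∈ spectrum ℝ (x - y)) :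
    ∃ ω : B →L[ℂ] ℂ, IsPureState ω ∧ ω x = 1 ∧ ω y = 0 := by
  have := (IsSelfAdjoint.of_nonneg hx |>.sub (.of_nonneg hy)).isStarNormal
  obtain ⟨φ, hφ, hφ1, hφc⟩ := exists_norm_le_one_apply_eq_of_mem_spectrum (c := x - y)
    (by simpa using spectrum.algebraMap_mem ℂ h)
  obtain ⟨ω, hω, hωc⟩ := exists_isPureState_apply_eq_one (norm_sub_le_one_of_nonneg hx hy hx1 hy1)
    (isState_of_norm_le_one_of_apply_one hφ hφ1) hφc
  exact ⟨ω, hω, hω.1.apply_eq_one_and_apply_eq_zero hx hy hx1 hωc⟩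

end PureStates

/-- For positive norm-one elements `a, b` of a unital C*-algebra, `‖a - b‖ = 1` iff
there is a pure state `ω` with `{ω a, ω b} = {0, 1}`. -/
theorem norm_sub_eq_one_iff_exists_pureState (a b : A)
    (ha : 0 ≤ a) (hb : 0 ≤ b) (ha1 : ‖a‖ = 1) (hb1 : ‖b‖ = 1) :
    ‖a - b‖ = 1 ↔ ∃ ω : A →L[ℂ] ℂ, IsPureState ω ∧ ({ω a, ω b} : Set ℂ) = {0, 1} := by
  have : Nontrivial A := ⟨a, 0, fun h ↦ by simp [h] at ha1⟩
  have hab := norm_sub_le_one_of_nonneg ha hb ha1.le hb1.le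
  refine ⟨fun h ↦ ?_, fun ⟨ω, hω, hpair⟩ ↦ le_antisymm hab ?_⟩
  · obtain hmem | hmem :=
      CStarAlgebra.norm_or_neg_norm_mem_spectrum (IsSelfAdjoint.of_nonneg ha |>.sub (.of_nonneg hb))
    · obtain ⟨ω, hω, hωa, hωb⟩ :=
        exists_isPureState_of_one_mem_spectrum_sub ha hb ha1.le hb1.le (h ▸ hmem)
      exact ⟨ω, hω, by rw [hωa, hωb, Set.pair_comm]⟩
    · have hmem' : (1 : ℝ) ∈ spectrum ℝ (b - a) := by
        rw [← neg_sub, ← spectrum.neg_eq]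
        simpa [h] using hmem
      obtain ⟨ω, hω, hωb, hωa⟩ :=
        exists_isPureState_of_one_mem_spectrum_sub hb ha hb1.le ha1.le hmem'
      exact ⟨ω, hω, by rw [hωa, hωb]⟩
  · calc 1 = ‖ω a - ω b‖ := by
          rcases Set.pair_eq_pair_iff.1 hpair with ⟨h0, h1⟩ | ⟨h1, h0⟩ <;> simp [h0, h1]
      _ = ‖ω (a - b)‖ := by rw [map_sub]
      _ ≤ ‖a - b‖ := hω.1.norm_apply_le _
end

section
/- Let A be a unital C*-algebra and let p be a projection in A. Then p is central (i.e., commutes with every element of A) if and only if ‖p − q‖ = 1 for every projection q in A with q ≠ p. -/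
/-!
If `p` and `q` are commuting projections, `(p - q) ^ 2 = p (1 - q) + (1 - p) q` is again a
projection, so the C*-identity forces `‖p - q‖ ∈ {0, 1}`.

Conversely, suppose `p` is norm-isolated among projections. For self-adjoint `k` the unitaries
`u t = exp (t • I • k)` give projections `u t * p * star (u t)` at distance
`‖p * u t - u t * p‖` from `p`, which tends to `0`; hence `u t` commutes with `p` for all small
`t`, and differentiating at `t = 0` shows that `k` commutes with `p`. Every element is
`ℜ x + I • ℑ x`.
-/

open NormedSpace Filter Topology
open scoped ComplexStarModule

theorem commute_of_eventually_commute_exp_smul {𝕂 𝔸 : Type*} [RCLike 𝕂] [NormedRing 𝔸]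
    [NormedAlgebra 𝕂 𝔸] [CompleteSpace 𝔸] {a b : 𝔸}
    (h : ∀ᶠ t : 𝕂 in 𝓝 0, Commute (exp (t • a)) b) : Commute a b := by
  have hexp := hasDerivAt_exp_smul_const a (0 : 𝕂)
  rw [zero_smul, exp_zero, one_mul] at hexp
  have hderiv := (hexp.mul_const b).sub (hexp.const_mul b)
  have hzero : HasDerivAt (fun t : 𝕂 => exp (t • a) * b - b * exp (t • a)) 0 0 :=
    (hasDerivAt_const (0 : 𝕂) (0 : 𝔸)).congr_of_eventuallyEq
      (h.mono fun t ht => sub_eq_zero.2 ht.eq)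
  exact sub_eq_zero.1 (hderiv.unique hzero)

namespace IsStarProjection

theorem norm_eq_one {E : Type*} [NonUnitalNormedRing E] [StarRing E] [CStarRing E] {e : E}
    (he : IsStarProjection e) (h0 : e ≠ 0) : ‖e‖ = 1 := by
  have hsq : ‖e‖ * ‖e‖ = ‖e‖ * 1 := by
    rw [mul_one, ← CStarRing.norm_star_mul_self, he.isSelfAdjoint.star_eq,
      he.isIdempotentElem.eq]
  exact mul_left_cancel₀ (norm_ne_zero_iff.2 h0) hsq

theorem sub_sq_of_commute {R : Type*} [Ring R] [StarRing R] {p q : R}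
    (hp : IsStarProjection p) (hq : IsStarProjection q) (hpq : Commute p q) :
    IsStarProjection ((p - q) ^ 2) := by
  have hsum : (p - q) ^ 2 = p * (1 - q) + (1 - p) * q := by
    rw [sq, sub_mul, mul_sub, mul_sub, hp.isIdempotentElem.eq, hq.isIdempotentElem.eq,
      ← hpq.eq]
    noncomm_ring
  rw [hsum]
  refine (hp.mul hq.one_sub ((Commute.one_right p).sub_right hpq)).add
    (hp.one_sub.mul hq ((Commute.one_left q).sub_left hpq)) ?_
  calc p * (1 - q) * ((1 - p) * q) = p * ((1 - q) * (1 - p)) * q := by simp only [mul_assoc]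
    _ = p * (1 - p) * ((1 - q) * q) := by
      rw [((Commute.one_left (1 - p)).sub_left ((Commute.one_right q).sub_right hpq.symm)).eq]
      simp only [mul_assoc]
    _ = 0 := by rw [hp.mul_one_sub_self, zero_mul]

theorem norm_sub_eq_one_of_commute {E : Type*} [NormedRing E] [StarRing E] [CStarRing E]
    {p q : E} (hp : IsStarProjection p) (hq : IsStarProjection q) (hpq : Commute p q)
    (hne : p ≠ q) : ‖p - q‖ = 1 := by
  have hsq : ‖(p - q) ^ 2‖ = ‖p - q‖ ^ 2 :=
    (hp.isSelfAdjoint.sub hq.isSelfAdjoint).norm_pow_two_pow 1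
  have hsq_ne : (p - q) ^ 2 ≠ 0 := by
    rw [← norm_ne_zero_iff, hsq]
    exact pow_ne_zero 2 (norm_ne_zero_iff.2 (sub_ne_zero.2 hne))
  rw [(hp.sub_sq_of_commute hq hpq).norm_eq_one hsq_ne] at hsq
  nlinarith [norm_nonneg (p - q)]

theorem star_right_conjugate {R : Type*} [Monoid R] [StarMul R] {p u : R}
    (hp : IsStarProjection p) (hu : u ∈ unitary R) : IsStarProjection (u * p * star u) where
  isSelfAdjoint := hp.isSelfAdjoint.conjugate u
  isIdempotentElem := by
    rw [IsIdempotentElem, mul_assoc, ← mul_assoc (star u), ← mul_assoc (star u),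
      Unitary.star_mul_self_of_mem hu, one_mul, ← mul_assoc (u * p), mul_assoc u p p,
      hp.isIdempotentElem.eq]

end IsStarProjection

theorem norm_sub_star_right_conjugate {E : Type*} [NormedRing E] [StarRing E] [CStarRing E]
    (x : E) {u : E} (hu : u ∈ unitary E) : ‖x - u * x * star u‖ = ‖x * u - u * x‖ := by
  rw [← CStarRing.norm_mul_mem_unitary (x * u - u * x) (Unitary.star_mem hu), sub_mul,
    mul_assoc x, Unitary.mul_star_self_of_mem hu, mul_one]

open Complex in
theorem IsStarProjection.commute_of_isolated {A : Type*} [CStarAlgebra A] {p : A}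
    (hp : IsStarProjection p) (hiso : ∀ q : A, IsStarProjection q → ‖p - q‖ < 1 → q = p)
    (x : A) : Commute p x := by
  have commute_of_isSelfAdjoint {k : A} (hk : IsSelfAdjoint k) : Commute k p := by
    -- the exponential needs a `ℚ`-normed-algebra structure, which is not an instance here
    let +nondep : NormedAlgebra ℚ A := .restrictScalars ℚ ℂ A
    let u (t : ℝ) : A := exp (t • I • k)
    have hu (t : ℝ) : u t ∈ unitary A :=
      exp_mem_unitary_of_mem_skewAdjoint
        (skewAdjoint.smul_mem t (hk.smul_mem_skewAdjoint conj_I))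
    have hcont : Continuous fun t => ‖p * u t - u t * p‖ := by fun_prop
    have hsmall : ∀ᶠ t in 𝓝 0, ‖p * u t - u t * p‖ < 1 :=
      hcont.continuousAt.eventually_lt continuousAt_const (by simp [u])
    have hIk : Commute (I • k) p := commute_of_eventually_commute_exp_smul (𝕂 := ℝ) <| by
      filter_upwards [hsmall] with t ht
      refine (commute_unitary_iff_star_right_conjugate (hu t)).2 <|
        hiso _ (hp.star_right_conjugate (hu t)) ?_
      rwa [norm_sub_star_right_conjugate p (hu t)]
    simpa [smul_smul] using hIk.smul_left I⁻¹
  rw [← realPart_add_I_smul_imaginaryPart x]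
  exact ((commute_of_isSelfAdjoint (ℜ x).2).add_left
    ((commute_of_isSelfAdjoint (ℑ x).2).smul_left I)).symm

variable {A : Type*} [CStarAlgebra A] [PartialOrder A] [StarOrderedRing A]

/-- A projection `p` in a unital C*-algebra is central iff it is at distance one
from every other projection. -/
theorem central_iff_norm_sub_proj_eq_one (p : A) (hp : IsSelfAdjoint p)
    (hp2 : IsIdempotentElem p) :
    (∀ x : A, p * x = x * p) ↔
      ∀ q : A, IsSelfAdjoint q → IsIdempotentElem q → q ≠ p → ‖p - q‖ = 1 := by
  have hproj : IsStarProjection p := ⟨hp2, hp⟩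
  constructor
  · intro hcentral q hq hq2 hne
    exact hproj.norm_sub_eq_one_of_commute ⟨hq2, hq⟩ (hcentral q) hne.symm
  · intro hdist x
    refine (hproj.commute_of_isolated (fun q hq hlt => ?_) x).eq
    by_contra hne
    exact hlt.ne (hdist q hq.isSelfAdjoint hq.isIdempotentElem hne)
end

section
/- Let A be a unital C*-algebra and let a be a positive norm-one element of A such that the double sphere condition holds: the set of positive norm-one elements c with ‖c − b‖ = 1 for all positive norm-one b satisfying ‖b − a‖ = 1 equals exactly {a}. Then the spectrum of a is contained in {0, 1}, i.e., a is a projection. -/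
/-!
If `b` lies at distance one from `a` in the positive unit sphere, then so does `a ^ 2`. The upper
bound holds for any two elements of `[0, 1]`. For the lower bound, `‖b - a‖ = 1` puts `1` in the
spectrum of `b - a` or of `a - b`, i.e. makes `1 - (b - a)` or `(1 - a) + b` non-invertible; since
`0 ≤ 1 - (b - a ^ 2) ≤ 1 - (b - a)` and `0 ≤ (1 - a ^ 2) + b ≤ 2 ((1 - a) + b)`, the same element
with `a` replaced by `a ^ 2` is non-invertible too. Hence `a ^ 2 ∈ Sph (Sph {a}) = {a}`.
-/

variable (A : Type*) [CStarAlgebra A] [PartialOrder A] [StarOrderedRing A]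

/-- The positive unit sphere of a C*-algebra. -/
def posSphere : Set A := {x : A | 0 ≤ x ∧ ‖x‖ = 1}

variable {A}

/-- The unit sphere around a subset `S` of the positive unit sphere. -/
def Sph (S : Set A) : Set A := {x : A | x ∈ posSphere A ∧ ∀ s ∈ S, ‖x - s‖ = 1}

open Set

lemma IsSelfAdjoint.norm_le_of_mem_Icc {x : A} (hx : IsSelfAdjoint x) {r : ℝ} (hr : 0 ≤ r)
    (hxr : x ∈ Icc (-algebraMap ℝ A r) (algebraMap ℝ A r)) : ‖x‖ ≤ r := by
  rcases subsingleton_or_nontrivial A with _ | _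
  · simp [Subsingleton.elim x 0, hr]
  rcases CStarAlgebra.norm_or_neg_norm_mem_spectrum hx with hmem | hmem
  · exact (le_algebraMap_iff_spectrum_le hx).mp hxr.2 _ hmem
  · rw [← map_neg] at hxr
    simpa using (algebraMap_le_iff_le_spectrum hx).mp hxr.1 _ hmem

lemma norm_sub_le_one_of_mem_Icc {x y : A} (hx : x ∈ Icc 0 1) (hy : y ∈ Icc 0 1) :
    ‖x - y‖ ≤ 1 := by
  refine (IsSelfAdjoint.of_nonneg hx.1 |>.sub <| .of_nonneg hy.1).norm_le_of_mem_Icc zero_le_one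
    ⟨?_, ?_⟩ <;> rw [map_one]
  · rw [neg_le, neg_sub]
    exact (sub_le_self _ hx.1).trans hy.2
  · exact (sub_le_self _ hy.1).trans hx.2

lemma one_mem_spectrum_of_sub_le_smul {x y : A} (hx : 0 ≤ 1 - x) {c : ℝ} (hc : c ≠ 0)
    (hxy : 1 - x ≤ c • (1 - y)) (hy : (1 : ℝ) ∈ spectrum ℝ y) : (1 : ℝ) ∈ spectrum ℝ x := by
  rw [spectrum.mem_iff, map_one] at hy ⊢
  refine fun hu ↦ hy ?_
  have := CStarAlgebra.isUnit_of_le _ hxy (IsStrictlyPositive.iff_of_unital.mpr ⟨hx, hu⟩)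
  exact (isUnit_smul_iff (Units.mk0 c hc) _).mp this

lemma one_le_norm_sq_sub {a b : A} (ha : a ∈ Icc 0 1) (hb : b ∈ Icc 0 1) (hab : ‖a - b‖ = 1) :
    1 ≤ ‖a ^ 2 - b‖ := by
  have : Nontrivial A := nontrivial_of_ne (a - b) 0 (by simp [← norm_ne_zero_iff, hab])
  have hsa : IsSelfAdjoint a := .of_nonneg ha.1
  have hsq_nonneg : 0 ≤ a ^ 2 := hsa.sq_nonneg
  have hsq_le : a ^ 2 ≤ a := by
    simpa using CStarAlgebra.pow_antitone ha.1 ha.2 one_le_two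
  have hmem := CStarAlgebra.norm_or_neg_norm_mem_spectrum (hsa.sub (.of_nonneg hb.1))
  rw [hab] at hmem
  rcases hmem with hmem | hmem
  · have : (1 : ℝ) ∈ spectrum ℝ (a ^ 2 - b) := by
      refine one_mem_spectrum_of_sub_le_smul ?_ two_ne_zero ?_ hmem
      · rw [sub_sub_eq_add_sub, add_sub_right_comm]
        exact add_nonneg (sub_nonneg.mpr (hsq_le.trans ha.2)) hb.1
      · -- the difference of the two sides is `(1 - a) ^ 2 + b`
        rw [← sub_nonneg]
        convert add_nonneg (IsSelfAdjoint.of_nonneg (sub_nonneg.mpr ha.2)).sq_nonneg hb.1 using 1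
        rw [two_smul]
        noncomm_ring
    simpa using spectrum.norm_le_norm_of_mem this
  · rw [← neg_sub b a, ← spectrum.neg_eq, Set.neg_mem_neg] at hmem
    have : (1 : ℝ) ∈ spectrum ℝ (b - a ^ 2) := by
      refine one_mem_spectrum_of_sub_le_smul ?_ one_ne_zero ?_ hmem
      · rw [sub_sub_eq_add_sub, add_sub_right_comm]
        exact add_nonneg (sub_nonneg.mpr hb.2) hsq_nonneg
      · rw [one_smul]
        exact sub_le_sub_left (sub_le_sub_left hsq_le b) 1
    rw [norm_sub_rev]
    simpa using spectrum.norm_le_norm_of_mem this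

lemma mem_Icc_of_mem_posSphere {x : A} (hx : x ∈ posSphere A) : x ∈ Icc 0 1 :=
  CStarAlgebra.mem_Icc_iff_norm_le_one.mpr ⟨hx.1, hx.2.le⟩

lemma sq_mem_posSphere {a : A} (ha : a ∈ posSphere A) : a ^ 2 ∈ posSphere A := by
  have hsa : IsSelfAdjoint a := .of_nonneg ha.1
  exact ⟨hsa.sq_nonneg, by rw [sq, hsa.norm_mul_self, ha.2, one_pow]⟩

lemma sq_mem_Sph_Sph_singleton {a : A} (ha : a ∈ posSphere A) : a ^ 2 ∈ Sph (Sph {a}) := by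
  refine ⟨sq_mem_posSphere ha, fun b hb ↦ le_antisymm ?_ ?_⟩
  · exact norm_sub_le_one_of_mem_Icc (mem_Icc_of_mem_posSphere (sq_mem_posSphere ha))
      (mem_Icc_of_mem_posSphere hb.1)
  · refine one_le_norm_sq_sub (mem_Icc_of_mem_posSphere ha) (mem_Icc_of_mem_posSphere hb.1) ?_
    rw [norm_sub_rev]
    exact hb.2 a rfl

/-- If a positive norm-one element `a` satisfies the double sphere condition
`Sph (Sph {a}) = {a}`, then `a` is a projection (its spectrum is contained in `{0, 1}`). -/
theorem isProjection_of_double_sphere (a : A) (ha : a ∈ posSphere A)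
    (h : Sph (Sph ({a} : Set A)) = {a}) :
    spectrum ℂ a ⊆ {0, 1} ∧ IsIdempotentElem a := by
  have hsq : a ^ 2 = a := by simpa [h] using sq_mem_Sph_Sph_singleton ha
  have hid : IsIdempotentElem a := (sq a).symm.trans hsq
  exact ⟨hid.spectrum_subset ℂ, hid⟩
end

section
/- Let p and q be projections in a unital C*-algebra A. Then p and q are orthogonal (pq = 0) if and only if ‖a − b‖ = 1 for all positive norm-one elements a, b ∈ A with pap = a and qbq = b. -/
/-!
If `p q = 0` then `b a = 0`, so `‖a‖ ^ 2 = ‖(a - b) a‖ ≤ ‖a - b‖`, while `-1 ≤ a - b ≤ 1`.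

If `p q ≠ 0`, test the hypothesis on the normalized compressions `a = pqp / ‖pqp‖` and
`b = qpq / ‖qpq‖`. If `‖a - b‖ = 1`, then up to swapping `p` and `q` the point `1` lies in the
spectrum of `a - b`, and continuous functional calculus yields a norm-one `e ≥ 0` which `a` almost
fixes and `b` almost kills. Then `‖pqe‖ ^ 2 = ‖e qpq e‖` is small and `e` lies almost under `p`, so
`‖pqp‖ ‖ae‖ = ‖pq (pe)‖ ≈ ‖pqe‖ ≈ 0`, contradicting `‖ae‖ ≈ ‖e‖ = 1`.
-/

variable {A : Type*} [CStarAlgebra A] [PartialOrder A] [StarOrderedRing A]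

lemma IsSelfAdjoint.mul_eq_zero_comm {R : Type*} [NonUnitalSemiring R] [StarRing R] {p q : R}
    (hp : IsSelfAdjoint p) (hq : IsSelfAdjoint q) : p * q = 0 ↔ q * p = 0 := by
  rw [← star_eq_zero, star_mul, hp.star_eq, hq.star_eq]

lemma IsSelfAdjoint.norm_le_one_of_neg_one_le_of_le_one {x : A} (hx : IsSelfAdjoint x)
    (h₁ : -1 ≤ x) (h₂ : x ≤ 1) : ‖x‖ ≤ 1 := by
  have h_upper : ∀ t ∈ spectrum ℝ x, t ≤ 1 :=
    (le_algebraMap_iff_spectrum_le hx).mp (by rwa [map_one])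
  have h_lower : ∀ t ∈ spectrum ℝ x, -1 ≤ t :=
    (algebraMap_le_iff_le_spectrum hx).mp (by rwa [map_neg, map_one])
  calc ‖x‖ = ‖cfc (id : ℝ → ℝ) x‖ := by rw [cfc_id ℝ x]
    _ ≤ 1 := norm_cfc_le zero_le_one fun t ht ↦ abs_le.mpr ⟨h_lower t ht, h_upper t ht⟩

lemma norm_sub_le_one_of_nonneg_of_le_one {a b : A} (ha₀ : 0 ≤ a) (ha₁ : a ≤ 1)
    (hb₀ : 0 ≤ b) (hb₁ : b ≤ 1) : ‖a - b‖ ≤ 1 := by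
  refine (IsSelfAdjoint.of_nonneg ha₀ |>.sub <| .of_nonneg hb₀).norm_le_one_of_neg_one_le_of_le_one
    ?_ ?_
  · calc -1 ≤ -b := neg_le_neg hb₁
      _ ≤ a - b := by simpa [sub_eq_neg_add] using ha₀
  · calc a - b ≤ a := sub_le_self a hb₀
      _ ≤ 1 := ha₁

lemma norm_sub_eq_one_of_mul_eq_zero {a b : A} (ha₀ : 0 ≤ a) (ha : ‖a‖ = 1)
    (hb₀ : 0 ≤ b) (hb : ‖b‖ = 1) (hba : b * a = 0) : ‖a - b‖ = 1 := by
  refine le_antisymm (norm_sub_le_one_of_nonneg_of_le_one ha₀ ?_ hb₀ ?_) ?_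
  · exact (CStarAlgebra.norm_le_one_iff_of_nonneg a).mp ha.le
  · exact (CStarAlgebra.norm_le_one_iff_of_nonneg b).mp hb.le
  calc 1 = ‖a * a‖ := by rw [(IsSelfAdjoint.of_nonneg ha₀).norm_mul_self, ha, one_pow]
    _ = ‖(a - b) * a‖ := by rw [sub_mul, hba, sub_zero]
    _ ≤ ‖a - b‖ * ‖a‖ := norm_mul_le _ _
    _ = ‖a - b‖ := by rw [ha, mul_one]

lemma IsSelfAdjoint.exists_nonneg_norm_eq_one_conj_le {x : A} (hx : IsSelfAdjoint x) {r : ℝ}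
    (hr : r ∈ spectrum ℝ x) {ε : ℝ} (hε : 0 < ε) :
    ∃ e : A, 0 ≤ e ∧ ‖e‖ = 1 ∧ e * (algebraMap ℝ A r - x) * e ≤ algebraMap ℝ A ε := by
  set f : ℝ → ℝ := fun t ↦ min 1 (max 0 (1 - (r - t) / ε))
  have hf_nonneg (t : ℝ) : 0 ≤ f t := le_min zero_le_one (le_max_left _ _)
  have hf_le_one (t : ℝ) : f t ≤ 1 := min_le_left _ _
  have hf_zero {t : ℝ} (ht : ε ≤ r - t) : f t = 0 := by
    have : 1 - (r - t) / ε ≤ 0 := by rw [sub_nonpos, le_div_iff₀ hε]; linarith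
    simp [f, this]
  have he₀ : 0 ≤ cfc f x := cfc_nonneg fun t _ ↦ hf_nonneg t
  refine ⟨cfc f x, he₀, le_antisymm ?_ ?_, ?_⟩
  · exact (CStarAlgebra.norm_le_one_iff_of_nonneg _).mpr (cfc_le_one f x fun t _ ↦ hf_le_one t)
  · simpa [f] using norm_apply_le_norm_cfc f x hr
  · have hconj : cfc f x * (algebraMap ℝ A r - x) * cfc f x
        = cfc (fun t ↦ f t * (r - t) * f t) x := by
      rw [cfc_mul .., cfc_mul .., cfc_sub .., cfc_const .., cfc_id' ..]
    rw [hconj]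
    refine cfc_le_algebraMap _ _ _ fun t _ ↦ ?_
    rcases le_total ε (r - t) with ht | ht
    · simp [hf_zero ht, hε.le]
    · have hf_sq₀ : 0 ≤ f t * f t := mul_nonneg (hf_nonneg t) (hf_nonneg t)
      have hf_sq₁ : f t * f t ≤ 1 := mul_le_one₀ (hf_le_one t) (hf_nonneg t) (hf_le_one t)
      rcases le_total (r - t) 0 with ht' | ht' <;> nlinarith

lemma norm_mul_sq_le_norm_star_mul_mul {y : A} (e : A) (hy₀ : 0 ≤ y) (hy₁ : y ≤ 1) :
    ‖y * e‖ ^ 2 ≤ ‖star e * y * e‖ := by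
  have hyy : y * y ≤ y := by
    simpa [sq] using CStarAlgebra.pow_antitone hy₀ hy₁ one_le_two
  have hyy₀ : 0 ≤ y * y := by
    simpa [(IsSelfAdjoint.of_nonneg hy₀).star_eq] using star_mul_self_nonneg y
  calc ‖y * e‖ ^ 2 = ‖star e * (y * y) * e‖ := by
        rw [sq, ← CStarRing.norm_star_mul_self, star_mul, (IsSelfAdjoint.of_nonneg hy₀).star_eq]
        simp only [mul_assoc]
    _ ≤ ‖star e * y * e‖ := CStarAlgebra.norm_le_norm_of_nonneg_of_le
        (star_left_conjugate_nonneg hyy₀ e) (star_left_conjugate_le_conjugate hyy e)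

lemma exists_approx_eigenvector_of_one_mem_spectrum_sub {a b : A} (ha₀ : 0 ≤ a) (ha₁ : a ≤ 1)
    (hb₀ : 0 ≤ b) (h : (1 : ℝ) ∈ spectrum ℝ (a - b)) {ε : ℝ} (hε : 0 < ε) :
    ∃ e : A, ‖e‖ = 1 ∧ ‖(1 - a) * e‖ ^ 2 ≤ ε ∧ ‖star e * b * e‖ ≤ ε := by
  have hab : IsSelfAdjoint (a - b) := (IsSelfAdjoint.of_nonneg ha₀).sub (.of_nonneg hb₀)
  obtain ⟨e, he₀, he, hconj⟩ := hab.exists_nonneg_norm_eq_one_conj_le h hε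
  have he_star : star e = e := (IsSelfAdjoint.of_nonneg he₀).star_eq
  have h₁ : 0 ≤ e * (1 - a) * e := by
    simpa only [he_star] using star_left_conjugate_nonneg (sub_nonneg.mpr ha₁) e
  have h₂ : 0 ≤ e * b * e := by
    simpa only [he_star] using star_left_conjugate_nonneg hb₀ e
  have hsum : e * (1 - a) * e + e * b * e ≤ algebraMap ℝ A ε := by
    convert hconj using 1
    rw [map_one]; noncomm_ring
  refine ⟨e, he, ?_, ?_⟩
  · calc ‖(1 - a) * e‖ ^ 2 ≤ ‖e * (1 - a) * e‖ := by
          simpa only [he_star] using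
            norm_mul_sq_le_norm_star_mul_mul e (sub_nonneg.mpr ha₁) (sub_le_self 1 ha₀)
      _ ≤ ε := (CStarAlgebra.norm_le_iff_le_algebraMap _ hε.le h₁).mpr
          ((le_add_of_nonneg_right h₂).trans hsum)
  · rw [he_star]
    exact (CStarAlgebra.norm_le_iff_le_algebraMap _ hε.le h₂).mpr
      ((le_add_of_nonneg_left h₁).trans hsum)

omit [PartialOrder A] [StarOrderedRing A] in
lemma IsStarProjection.norm_mul_mul_le {p a : A} (hp : IsStarProjection p) (hpa : p * a = a)
    (c e : A) : ‖c * p * e‖ ≤ ‖c * e‖ + ‖c‖ * ‖(1 - a) * e‖ := by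
  have hsplit : c * p * e = c * e - c * (1 - p) * ((1 - a) * e) := by
    have : (1 - p) * (1 - a) = 1 - p := by
      rw [mul_sub, mul_one, sub_mul, one_mul, hpa, sub_self, sub_zero]
    rw [show c * (1 - p) * ((1 - a) * e) = c * ((1 - p) * (1 - a)) * e by noncomm_ring, this]
    noncomm_ring
  calc ‖c * p * e‖ ≤ ‖c * e‖ + ‖c * (1 - p) * ((1 - a) * e)‖ := hsplit ▸ norm_sub_le _ _
    _ ≤ ‖c * e‖ + ‖c‖ * ‖(1 - a) * e‖ := by
        gcongr
        calc ‖c * (1 - p) * ((1 - a) * e)‖ ≤ ‖c‖ * ‖1 - p‖ * ‖(1 - a) * e‖ := norm_mul₃_le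
          _ ≤ ‖c‖ * 1 * ‖(1 - a) * e‖ := by gcongr; exact hp.one_sub.norm_le
          _ = ‖c‖ * ‖(1 - a) * e‖ := by rw [mul_one]

noncomputable def normalizedCompression (p q : A) : A := ‖p * q * p‖⁻¹ • (p * q * p)

omit [PartialOrder A] [StarOrderedRing A] in
lemma norm_smul_normalizedCompression (p q : A) :
    ‖p * q * p‖ • normalizedCompression p q = p * q * p := by
  rcases eq_or_ne (p * q * p) 0 with h | h
  · simp [normalizedCompression, h]
  · exact smul_inv_smul₀ (norm_ne_zero_iff.mpr h) _

omit [PartialOrder A] [StarOrderedRing A] in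
lemma norm_normalizedCompression {p q : A} (h : p * q * p ≠ 0) :
    ‖normalizedCompression p q‖ = 1 := by
  rw [normalizedCompression, norm_smul, norm_inv, norm_norm,
    inv_mul_cancel₀ (norm_ne_zero_iff.mpr h)]

omit [PartialOrder A] [StarOrderedRing A] in
lemma mul_normalizedCompression {p : A} (hp : IsIdempotentElem p) (q : A) :
    p * normalizedCompression p q = normalizedCompression p q := by
  rw [normalizedCompression, mul_smul_comm, ← mul_assoc, ← mul_assoc, hp.eq]

omit [PartialOrder A] [StarOrderedRing A] in
lemma normalizedCompression_mul {p : A} (hp : IsIdempotentElem p) (q : A) :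
    normalizedCompression p q * p = normalizedCompression p q := by
  rw [normalizedCompression, smul_mul_assoc, mul_assoc (p * q) p p, hp.eq]

omit [PartialOrder A] [StarOrderedRing A] in
lemma mul_mul_self_eq_star_mul_self {p q : A} (hp : IsSelfAdjoint p) (hq : IsStarProjection q) :
    p * q * p = star (q * p) * (q * p) := by
  rw [star_mul, hp.star_eq, hq.isSelfAdjoint.star_eq, ← mul_assoc, mul_assoc p q q,
    hq.isIdempotentElem.eq]

omit [PartialOrder A] [StarOrderedRing A] in
lemma mul_mul_self_ne_zero {p q : A} (hp : IsSelfAdjoint p) (hq : IsStarProjection q)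
    (hqp : q * p ≠ 0) : p * q * p ≠ 0 := by
  rwa [mul_mul_self_eq_star_mul_self hp hq, Ne, CStarRing.star_mul_self_eq_zero_iff]

lemma normalizedCompression_nonneg {p q : A} (hp : IsSelfAdjoint p) (hq : IsStarProjection q) :
    0 ≤ normalizedCompression p q :=
  smul_nonneg (inv_nonneg.mpr (norm_nonneg _))
    (mul_mul_self_eq_star_mul_self hp hq ▸ star_mul_self_nonneg _)

omit [PartialOrder A] [StarOrderedRing A] in
lemma IsStarProjection.norm_mul_mul_le_one {p q : A} (hp : IsStarProjection p)
    (hq : IsStarProjection q) : ‖p * q * p‖ ≤ 1 :=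
  norm_mul₃_le.trans <|
    mul_le_one₀ (mul_le_one₀ hp.norm_le (norm_nonneg q) hq.norm_le) (norm_nonneg p) hp.norm_le

omit [PartialOrder A] [StarOrderedRing A] in
lemma norm_mul_mul_sq_le_norm_star_mul_normalizedCompression_mul {p q : A}
    (hp : IsStarProjection p) (hq : IsStarProjection q) (e : A) :
    ‖p * q * e‖ ^ 2 ≤ ‖star e * normalizedCompression q p * e‖ :=
  calc ‖p * q * e‖ ^ 2 = ‖star e * (q * p * q) * e‖ := by
        rw [sq, ← CStarRing.norm_star_mul_self, mul_mul_self_eq_star_mul_self hq.isSelfAdjoint hp]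
        simp only [star_mul, mul_assoc]
    _ = ‖star e * (‖q * p * q‖ • normalizedCompression q p) * e‖ := by
        rw [norm_smul_normalizedCompression]
    _ = ‖q * p * q‖ * ‖star e * normalizedCompression q p * e‖ := by
        rw [mul_smul_comm, smul_mul_assoc, norm_smul, norm_norm]
    _ ≤ ‖star e * normalizedCompression q p * e‖ :=
        mul_le_of_le_one_left (norm_nonneg _) (hq.norm_mul_mul_le_one hp)

lemma one_notMem_spectrum_normalizedCompression_sub {p q : A} (hp : IsStarProjection p)
    (hq : IsStarProjection q) (hpq : p * q ≠ 0) :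
    (1 : ℝ) ∉ spectrum ℝ (normalizedCompression p q - normalizedCompression q p) := by
  intro h
  set a := normalizedCompression p q
  set b := normalizedCompression q p
  set n := ‖p * q * p‖
  have hqp : q * p ≠ 0 := (hp.isSelfAdjoint.mul_eq_zero_comm hq.isSelfAdjoint).not.mp hpq
  have hpqp : p * q * p ≠ 0 := mul_mul_self_ne_zero hp.isSelfAdjoint hq hqp
  have hn : 0 < n := norm_pos_iff.mpr hpqp
  have ha₁ : a ≤ 1 := (CStarAlgebra.norm_le_one_iff_of_nonneg a
    (normalizedCompression_nonneg hp.isSelfAdjoint hq)).mp (norm_normalizedCompression hpqp).le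
  obtain ⟨e, he, hae, hbe⟩ := exists_approx_eigenvector_of_one_mem_spectrum_sub
    (normalizedCompression_nonneg hp.isSelfAdjoint hq) ha₁
    (normalizedCompression_nonneg hq.isSelfAdjoint hp) h (ε := (n / 4) ^ 2) (by positivity)
  have h_fix : ‖(1 - a) * e‖ ≤ n / 4 := (sq_le_sq₀ (norm_nonneg _) (by positivity)).mp hae
  have h_kill : ‖p * q * e‖ ≤ n / 4 :=
    (sq_le_sq₀ (norm_nonneg _) (by positivity)).mp
      ((norm_mul_mul_sq_le_norm_star_mul_normalizedCompression_mul hp hq e).trans hbe)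
  have h_upper : ‖a * e‖ ≤ 1 / 2 := by
    have hpq₁ : ‖p * q‖ ≤ 1 := (norm_mul_le _ _).trans
      (mul_le_one₀ hp.norm_le (norm_nonneg q) hq.norm_le)
    refine le_of_mul_le_mul_left ?_ hn
    calc n * ‖a * e‖ = ‖p * q * p * e‖ := by
          rw [← norm_smul_normalizedCompression p q, smul_mul_assoc, norm_smul, norm_norm]
      _ ≤ ‖p * q * e‖ + ‖p * q‖ * ‖(1 - a) * e‖ :=
          hp.norm_mul_mul_le (mul_normalizedCompression hp.isIdempotentElem q) (p * q) e
      _ ≤ n / 4 + 1 * (n / 4) := by gcongr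
      _ = n * (1 / 2) := by ring
  have h_lower : 1 - n / 4 ≤ ‖a * e‖ := by
    have : ‖e‖ ≤ ‖a * e‖ + ‖(1 - a) * e‖ := by
      simpa [← add_mul] using norm_add_le (a * e) ((1 - a) * e)
    linarith
  linarith [hp.norm_mul_mul_le_one hq]

/-- Two projections `p, q` in a unital C*-algebra are orthogonal iff `‖a - b‖ = 1` for all
positive norm-one elements `a, b` with `p a p = a` and `q b q = b`. -/
theorem orthogonal_iff_dist_one (p q : A) (hp : IsSelfAdjoint p) (hp2 : IsIdempotentElem p)
    (hq : IsSelfAdjoint q) (hq2 : IsIdempotentElem q) :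
    p * q = 0 ↔
      ∀ a b : A, 0 ≤ a → ‖a‖ = 1 → p * a * p = a →
        0 ≤ b → ‖b‖ = 1 → q * b * q = b → ‖a - b‖ = 1 := by
  have hP : IsStarProjection p := ⟨hp2, hp⟩
  have hQ : IsStarProjection q := ⟨hq2, hq⟩
  constructor
  · intro hpq a b ha₀ ha hpa hb₀ hb hqb
    have hqp : q * p = 0 := (hp.mul_eq_zero_comm hq).mp hpq
    refine norm_sub_eq_one_of_mul_eq_zero ha₀ ha hb₀ hb ?_
    rw [← hqb, ← hpa]
    simp only [mul_assoc, ← mul_assoc q p, hqp, zero_mul, mul_zero]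
  · intro h
    by_contra hpq
    have hqp : q * p ≠ 0 := (hp.mul_eq_zero_comm hq).not.mp hpq
    have : Nontrivial A := nontrivial_of_ne _ _ hpq
    have h_dist := h _ _ (normalizedCompression_nonneg hp hQ)
      (norm_normalizedCompression (mul_mul_self_ne_zero hp hQ hqp))
      (by rw [mul_normalizedCompression hp2, normalizedCompression_mul hp2])
      (normalizedCompression_nonneg hq hP)
      (norm_normalizedCompression (mul_mul_self_ne_zero hq hP hpq))
      (by rw [mul_normalizedCompression hq2, normalizedCompression_mul hq2])
    have hx : IsSelfAdjoint (normalizedCompression p q - normalizedCompression q p) :=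
      (IsSelfAdjoint.of_nonneg (normalizedCompression_nonneg hp hQ)).sub
        (.of_nonneg (normalizedCompression_nonneg hq hP))
    rcases CStarAlgebra.norm_or_neg_norm_mem_spectrum hx with h_one | h_neg_one
    · exact one_notMem_spectrum_normalizedCompression_sub hP hQ hpq (h_dist ▸ h_one)
    · refine one_notMem_spectrum_normalizedCompression_sub hQ hP hqp ?_
      rw [← neg_sub, ← spectrum.neg_eq, Set.mem_neg, ← h_dist]
      exact h_neg_one
end

section
/- In a complex spin factor V, every projection is either 0, the unit 1, or a minimal projection of the form (1 + i b)/2 where b is an element of V with b̄ = b, ‖b‖ = 1, and ⟨1 | b⟩ = 0. -/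
/-- A (complex) spin factor structure on a complex Hilbert space `V`:
a conjugation (conjugate-linear isometry of period 2) together with a distinguished
norm-one element `one` fixed by the conjugation. Here `⟨a|b⟩` of the literature
(linear in the first variable) corresponds to `inner b a` in Mathlib. -/
structure SpinFactor (V : Type*) [NormedAddCommGroup V] [InnerProductSpace ℂ V] where
  conj : V → V
  conj_add : ∀ x y : V, conj (x + y) = conj x + conj y
  conj_smul : ∀ (c : ℂ) (x : V), conj (c • x) = (starRingEnd ℂ c) • conj x
  conj_conj : ∀ x : V, conj (conj x) = x
  conj_isometry : ∀ x : V, ‖conj x‖ = ‖x‖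
  one : V
  norm_one : ‖one‖ = 1
  conj_one : conj one = one

namespace SpinFactor

variable {V : Type*} [NormedAddCommGroup V] [InnerProductSpace ℂ V] (S : SpinFactor V)

/-- The Jordan product `a ∘ b = ⟨a|1⟩b + ⟨b|1⟩a − ⟨a|b̄⟩1` of the spin factor. -/
noncomputable def jmul (a b : V) : V :=
  (inner ℂ S.one a : ℂ) • b + (inner ℂ S.one b : ℂ) • a - (inner ℂ (S.conj b) a : ℂ) • S.one

/-- The involution `a* = 2⟨1|a⟩1 − ā` of the spin factor. -/
noncomputable def jstar (a : V) : V := (2 * (inner ℂ a S.one : ℂ)) • S.one - S.conj a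

/-- The spin factor norm: `‖a‖² = ⟨a|a⟩ + (⟨a|a⟩² − |⟨a|ā⟩|²)^{1/2}`. -/
noncomputable def snorm (a : V) : ℝ :=
  Real.sqrt (‖a‖ ^ 2 + Real.sqrt ((‖a‖ ^ 2) ^ 2 - ‖(inner ℂ (S.conj a) a : ℂ)‖ ^ 2))

/-- Projections of the spin factor: self-adjoint Jordan idempotents. -/
def IsProjection (p : V) : Prop := S.jmul p p = p ∧ S.jstar p = p

end SpinFactor

open SpinFactor

/-!
A projection `p` with `c = ⟨p|1⟩` satisfies `p̄ = 2c̄·1 − p` by self-adjointness, so the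
idempotence `p ∘ p = p` becomes the linear relation `(2c − 1) p = (2c² − ⟨p|p⟩) 1`. Pairing it
with `1` gives `⟨p|p⟩ = c`. If `2c ≠ 1`, then `p = c·1` and `|c|² = c`, so `p` is `0` or `1`;
if `2c = 1`, then `b = −i(2p − 1)` is a self-conjugate unit vector orthogonal to `1`.
-/

namespace SpinFactor

variable {V : Type*} [NormedAddCommGroup V] [InnerProductSpace ℂ V] (S : SpinFactor V)

theorem conj_sub (x y : V) : S.conj (x - y) = S.conj x - S.conj y := by
  rw [eq_sub_iff_add_eq, ← S.conj_add, sub_add_cancel]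

theorem inner_one_one : (inner ℂ S.one S.one : ℂ) = 1 := by
  rw [inner_self_eq_norm_sq_to_K, S.norm_one]
  norm_num

variable {S} {p : V}

theorem conj_eq_of_jstar_eq_self (h : S.jstar p = p) :
    S.conj p = (2 * (inner ℂ p S.one : ℂ)) • S.one - p :=
  calc S.conj p = (2 * (inner ℂ p S.one : ℂ)) • S.one - S.jstar p := by unfold jstar; abel
    _ = (2 * (inner ℂ p S.one : ℂ)) • S.one - p := by rw [h]

theorem inner_conj_self_of_jstar_eq_self (h : S.jstar p = p) :
    (inner ℂ (S.conj p) p : ℂ) = 2 * (inner ℂ S.one p : ℂ) ^ 2 - inner ℂ p p := by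
  rw [conj_eq_of_jstar_eq_self h, inner_sub_left, inner_smul_left, map_mul, Complex.conj_ofNat,
    inner_conj_symm]
  ring

namespace IsProjection

theorem two_inner_one_sub_one_smul (hp : S.IsProjection p) :
    (2 * (inner ℂ S.one p : ℂ) - 1) • p =
      (2 * (inner ℂ S.one p : ℂ) ^ 2 - inner ℂ p p) • S.one := by
  have hsq := hp.1
  unfold jmul at hsq
  rw [inner_conj_self_of_jstar_eq_self hp.2, sub_eq_iff_eq_add] at hsq
  calc (2 * (inner ℂ S.one p : ℂ) - 1) • p
        = (inner ℂ S.one p : ℂ) • p + (inner ℂ S.one p : ℂ) • p - p := by module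
    _ = p + (2 * (inner ℂ S.one p : ℂ) ^ 2 - inner ℂ p p) • S.one - p := by rw [hsq]
    _ = (2 * (inner ℂ S.one p : ℂ) ^ 2 - inner ℂ p p) • S.one := add_sub_cancel_left _ _

theorem inner_self_eq_inner_one (hp : S.IsProjection p) :
    (inner ℂ p p : ℂ) = inner ℂ S.one p := by
  have h := congrArg (inner ℂ S.one) hp.two_inner_one_sub_one_smul
  simp only [inner_smul_right, S.inner_one_one] at h
  linear_combination h

theorem eq_inner_one_smul_one (hp : S.IsProjection p) (hc : 2 * (inner ℂ S.one p : ℂ) ≠ 1) :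
    p = (inner ℂ S.one p : ℂ) • S.one := by
  have h : (2 * (inner ℂ S.one p : ℂ) - 1) • p =
      (2 * (inner ℂ S.one p : ℂ) - 1) • (inner ℂ S.one p : ℂ) • S.one := by
    rw [hp.two_inner_one_sub_one_smul, hp.inner_self_eq_inner_one, smul_smul]
    congr 1
    ring
  exact smul_right_injective V (sub_ne_zero.mpr hc) h

theorem eq_zero_or_eq_one (hp : S.IsProjection p) (hc : 2 * (inner ℂ S.one p : ℂ) ≠ 1) :
    p = 0 ∨ p = S.one := by
  have hpc := hp.eq_inner_one_smul_one hc
  set c : ℂ := inner ℂ S.one p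
  have hc_idem : c * (1 - starRingEnd ℂ c) = 0 := by
    have h := hp.inner_self_eq_inner_one
    rw [hpc, inner_smul_left, inner_smul_right, S.inner_one_one, mul_one] at h
    linear_combination -h
  rcases mul_eq_zero.mp hc_idem with h0 | h1
  · left
    rw [hpc, h0, zero_smul]
  · right
    have : c = 1 := by simpa using (congrArg (starRingEnd ℂ) (sub_eq_zero.mp h1)).symm
    rw [hpc, this, one_smul]

theorem exists_of_two_inner_one_eq_one (hp : S.IsProjection p)
    (hc : 2 * (inner ℂ S.one p : ℂ) = 1) :
    ∃ b : V, S.conj b = b ∧ ‖b‖ = 1 ∧ (inner ℂ S.one b : ℂ) = 0 ∧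
      p = (2 : ℂ)⁻¹ • (S.one + Complex.I • b) := by
  have hc' : (inner ℂ S.one p : ℂ) = 2⁻¹ := by linear_combination hc / 2
  have hc'' : (inner ℂ p S.one : ℂ) = 2⁻¹ := by
    rw [← inner_conj_symm, hc', map_inv₀, Complex.conj_ofNat]
  have hconj : S.conj p = S.one - p := by
    rw [conj_eq_of_jstar_eq_self hp.2, hc'']
    module
  refine ⟨(-Complex.I) • ((2 : ℂ) • p - S.one), ?_, ?_, ?_, ?_⟩
  · rw [S.conj_smul, S.conj_sub, S.conj_smul, S.conj_one, hconj]
    simp only [map_neg, Complex.conj_I, map_ofNat, neg_neg]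
    module
  · have hinner : (inner ℂ ((2 : ℂ) • p - S.one) ((2 : ℂ) • p - S.one) : ℂ) = 1 := by
      rw [inner_sub_sub_self, inner_smul_left, inner_smul_right, inner_smul_left,
        inner_smul_right, S.inner_one_one, hp.inner_self_eq_inner_one, hc', hc'',
        Complex.conj_ofNat]
      norm_num
    have hnorm : ‖(2 : ℂ) • p - S.one‖ = 1 := by
      rw [← pow_eq_one_iff_of_nonneg (norm_nonneg _) two_ne_zero,
        ← inner_self_eq_norm_sq (𝕜 := ℂ), hinner]
      simp
    rw [norm_smul, hnorm]
    simp
  · rw [inner_smul_right, inner_sub_right, inner_smul_right, S.inner_one_one, hc']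
    ring
  · rw [smul_smul, mul_neg, Complex.I_mul_I, neg_neg, one_smul]
    module

end IsProjection

end SpinFactor

theorem spinFactor_projection_classification_general
    {V : Type*} [NormedAddCommGroup V] [InnerProductSpace ℂ V]
    (S : SpinFactor V) (p : V) (hp : S.IsProjection p) :
    p = 0 ∨ p = S.one ∨
      ∃ b : V, S.conj b = b ∧ ‖b‖ = 1 ∧ (inner ℂ S.one b : ℂ) = 0 ∧
        p = (2 : ℂ)⁻¹ • (S.one + Complex.I • b) := by
  by_cases hc : 2 * (inner ℂ S.one p : ℂ) = 1
  · exact Or.inr (Or.inr (hp.exists_of_two_inner_one_eq_one hc))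
  · exact (hp.eq_zero_or_eq_one hc).imp_right Or.inl

/-- In a complex spin factor (of dimension at least 3), every projection is `0`, the unit,
or a minimal projection `(1 + i b)/2` with `b` fixed by the conjugation, of norm one and
orthogonal to the unit. -/
theorem spinFactor_projection_classification
    {V : Type*} [NormedAddCommGroup V] [InnerProductSpace ℂ V] [CompleteSpace V]
    (hdim : 3 ≤ Module.rank ℂ V) (S : SpinFactor V) (p : V) (hp : S.IsProjection p) :
    p = 0 ∨ p = S.one ∨
      ∃ b : V, S.conj b = b ∧ ‖b‖ = 1 ∧ (inner ℂ S.one b : ℂ) = 0 ∧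
        p = (2 : ℂ)⁻¹ • (S.one + Complex.I • b) :=
  spinFactor_projection_classification_general S p hp
end

section
/- There exist spin factors V₃ (dimension 3) and V₄ (dimension 4), which are not Jordan *-isomorphic, and an order isomorphism Θ between their projection lattices that preserves points at diametrical distance: ‖p − q‖ = 1 if and only if ‖Θ(p) − Θ(q)‖ = 1. -/
open SpinFactor

/-- Positivity in a spin factor: squares of self-adjoint elements. -/
def SpinFactor.IsPos {V : Type*} [NormedAddCommGroup V] [InnerProductSpace ℂ V]
    (S : SpinFactor V) (a : V) : Prop :=
  ∃ b : V, S.jstar b = b ∧ S.jmul b b = a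

universe u

section FreeInvolution

open Cardinal

def negOrbitSetoid (A : Type u) [InvolutiveNeg A] : Setoid A where
  r a b := b = a ∨ b = -a
  iseqv := by
    refine ⟨fun _ => .inl rfl, ?_, ?_⟩
    · rintro a b (rfl | rfl)
      · exact .inl rfl
      · exact .inr (neg_neg a).symm
    · rintro a b c (rfl | rfl) (rfl | rfl)
      · exact .inl rfl
      · exact .inr rfl
      · exact .inr rfl
      · exact .inl (neg_neg a)

lemma mk_eq_of_prod_bool_equiv {Q A : Type u} (e : Q × Bool ≃ A) (hA : ℵ₀ ≤ #A) : #Q = #A := by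
  have hQA : #A = #Q * 2 := by simp [← mk_congr e, mk_prod]
  have hQ : ℵ₀ ≤ #Q := by
    by_contra! hQ
    exact (hQA ▸ hA).not_gt (mul_lt_aleph0 hQ (ofNat_lt_aleph0 (n := 2)))
  rw [hQA, Cardinal.mul_eq_left hQ ((ofNat_lt_aleph0 (n := 2)).le.trans hQ) two_ne_zero]

variable {A B : Type u} [InvolutiveNeg A] [InvolutiveNeg B]

lemma exists_prod_bool_equiv (hA : ∀ a : A, -a ≠ a) :
    ∃ (Q : Type u) (e : Q × Bool ≃ A), ∀ q b, e (q, !b) = -e (q, b) := by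
  -- `Quotient.out` chooses one point of each antipodal pair.
  let s := negOrbitSetoid A
  let f : Quotient s × Bool → A := fun x => cond x.2 x.1.out (-x.1.out)
  have hf : ∀ x, Quotient.mk s (f x) = x.1 := by
    rintro ⟨q, _ | _⟩
    · exact (Quotient.sound (a := -q.out) (b := q.out) (Or.inr (neg_neg _).symm)).trans q.out_eq
    · exact q.out_eq
  refine ⟨Quotient s, Equiv.ofBijective f ⟨?_, fun a => ?_⟩, ?_⟩
  · rintro ⟨q, b⟩ ⟨q', b'⟩ h
    obtain rfl : q = q' := (hf (q, b)).symm.trans ((congrArg _ h).trans (hf (q', b')))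
    cases b <;> cases b' <;> simp only [f, cond_true, cond_false] at h
    · rfl
    · exact absurd h (hA _)
    · exact absurd h.symm (hA _)
    · rfl
  · rcases Quotient.mk_out (s := s) a with h | h
    · exact ⟨(⟦a⟧, true), h.symm⟩
    · exact ⟨(⟦a⟧, false), h.symm⟩
  · rintro q (_ | _)
    · exact (neg_neg (f (q, true))).symm
    · rfl

theorem exists_equiv_neg_comm (hA : ∀ a : A, -a ≠ a) (hB : ∀ b : B, -b ≠ b) (hAB : #A = #B)
    (hA₀ : ℵ₀ ≤ #A) : ∃ φ : A ≃ B, ∀ a, φ (-a) = -φ a := by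
  obtain ⟨P, eA, heA⟩ := exists_prod_bool_equiv hA
  obtain ⟨Q, eB, heB⟩ := exists_prod_bool_equiv hB
  obtain ⟨g⟩ := Cardinal.eq.mp <| (mk_eq_of_prod_bool_equiv eA hA₀).trans <|
    hAB.trans (mk_eq_of_prod_bool_equiv eB (hAB ▸ hA₀)).symm
  refine ⟨eA.symm.trans ((g.prodCongr (Equiv.refl Bool)).trans eB), fun a => ?_⟩
  obtain ⟨⟨p, b⟩, rfl⟩ := eA.surjective a
  simp [← heA, heB]

end FreeInvolution

section Sphere

open Cardinal Metric

lemma continuum_le_mk_sphere {E : Type u} [NormedAddCommGroup E] [NormedSpace ℝ E]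
    (hE : 1 < Module.rank ℝ E) {r : ℝ} (hr : 0 < r) : 𝔠 ≤ #(sphere (0 : E) r) := by
  have : Nontrivial E := rank_pos_iff_nontrivial.mp (zero_lt_one.trans hE)
  obtain ⟨x, hx⟩ := (NormedSpace.sphere_nonempty (x := (0 : E))).mpr hr.le
  have hx' : ‖x‖ = r := by simpa using hx
  let f : E → ℝ := fun v => ‖v - x‖
  have hIcc : Set.Icc 0 (2 * r) ⊆ f '' sphere 0 r := by
    refine ((isPreconnected_sphere hE 0 r).image f (by fun_prop)).Icc_subset
      ⟨x, hx, by simp [f]⟩ ⟨-x, by simpa using hx, ?_⟩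
    simp only [f, ← neg_add', norm_neg, ← two_smul ℝ x, norm_smul, hx']
    norm_num
  calc 𝔠 = lift.{u} #(Set.Icc 0 (2 * r)) := by rw [mk_Icc_real (by positivity), lift_continuum]
    _ ≤ lift.{u} #(f '' sphere 0 r) := lift_le.mpr (mk_le_mk_of_subset hIcc)
    _ ≤ lift.{0} #(sphere (0 : E) r) := mk_image_le_lift
    _ = #(sphere (0 : E) r) := lift_uzero _

lemma mk_sphere_euclideanSpace {n : ℕ} (hn : 2 ≤ n) {r : ℝ} (hr : 0 < r) :
    #(sphere (0 : EuclideanSpace ℝ (Fin n)) r) = 𝔠 := by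
  refine le_antisymm ?_ (continuum_le_mk_sphere ?_ hr)
  · calc #(sphere (0 : EuclideanSpace ℝ (Fin n)) r)
        ≤ #(EuclideanSpace ℝ (Fin n)) := mk_set_le _
      _ = #(Fin n → ℝ) := mk_congr (WithLp.equiv 2 _)
      _ = 𝔠 := by simp [mk_real, power_nat_eq aleph0_le_continuum (by omega : 1 ≤ n)]
  · exact Module.one_lt_rank_of_one_lt_finrank (by rw [finrank_euclideanSpace_fin]; omega)

theorem exists_equiv_sphere_neg_comm {m n : ℕ} (hm : 2 ≤ m) (hn : 2 ≤ n) {r : ℝ} (hr : 0 < r) :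
    ∃ φ : sphere (0 : EuclideanSpace ℝ (Fin m)) r ≃ sphere (0 : EuclideanSpace ℝ (Fin n)) r,
      ∀ t, φ (-t) = -φ t :=
  exists_equiv_neg_comm (fun t => (ne_neg_of_mem_sphere ℝ hr.ne' t).symm)
    (fun t => (ne_neg_of_mem_sphere ℝ hr.ne' t).symm)
    ((mk_sphere_euclideanSpace hm hr).trans (mk_sphere_euclideanSpace hn hr).symm)
    ((mk_sphere_euclideanSpace hm hr).symm ▸ aleph0_le_continuum)

lemma norm_sub_eq_two_mul_iff_eq_neg {E : Type*} [NormedAddCommGroup E] [NormedSpace ℝ E]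
    [StrictConvexSpace ℝ E] {r : ℝ} (s t : sphere (0 : E) r) :
    ‖(s : E) - t‖ = 2 * r ↔ t = -s := by
  have hs : ‖(s : E)‖ = r := norm_eq_of_mem_sphere s
  have ht : ‖(t : E)‖ = r := norm_eq_of_mem_sphere t
  rw [show 2 * r = ‖(s : E)‖ + ‖-(t : E)‖ by rw [norm_neg, hs, ht, two_mul], sub_eq_add_neg,
    ← sameRay_iff_norm_add, sameRay_iff_of_norm_eq (by rw [norm_neg, hs, ht]), Subtype.ext_iff,
    coe_neg_sphere, eq_comm, neg_eq_iff_eq_neg]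

end Sphere

-- `inl false`, `inl true` and `inr t` stand for the projections `0`, `1` and `½ • 1 + i t`
-- of `stdSpinFactor.proj`.
def IsDiametral {S : Type*} [Neg S] : Bool ⊕ S → Bool ⊕ S → Prop
  | .inl a, .inl b => a ≠ b
  | .inl _, .inr _ => True
  | .inr _, .inl _ => True
  | .inr s, .inr t => t = -s

lemma isDiametral_sumCongr {S S' : Type*} [Neg S] [Neg S'] (φ : S ≃ S')
    (hφ : ∀ s, φ (-s) = -φ s) (k l : Bool ⊕ S) :
    IsDiametral (Equiv.sumCongr (Equiv.refl Bool) φ k) (Equiv.sumCongr (Equiv.refl Bool) φ l) ↔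
      IsDiametral k l := by
  rcases k with _ | s <;> rcases l with _ | t <;> simp [IsDiametral, ← hφ]

lemma sumCongr_refl_eq_inl_iff {S S' : Type*} (φ : S ≃ S') (k : Bool ⊕ S) (b : Bool) :
    Equiv.sumCongr (Equiv.refl Bool) φ k = .inl b ↔ k = .inl b := by
  rcases k with _ | s <;> simp

lemma SpinFactor.IsProjection.isPos {V : Type*} [NormedAddCommGroup V] [InnerProductSpace ℂ V]
    {S : SpinFactor V} {p : V} (hp : S.IsProjection p) : S.IsPos p :=
  ⟨p, hp.2, hp.1⟩

noncomputable def stdSpinFactor (n : ℕ) : SpinFactor (EuclideanSpace ℂ (Fin (n + 1))) where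
  conj x := WithLp.toLp 2 fun i => star (x i)
  conj_add x y := by ext; simp
  conj_smul c x := by ext; simp
  conj_conj x := by ext; simp
  conj_isometry x := by simp [EuclideanSpace.norm_eq]
  one := EuclideanSpace.single 0 1
  norm_one := by simp
  conj_one := by ext i; simp [PiLp.single_apply, apply_ite]

namespace stdSpinFactor

open Metric

variable {n : ℕ}

-- The self-adjoint element `c • 1 + i t`.
noncomputable def saElem (c : ℝ) (t : EuclideanSpace ℝ (Fin n)) : EuclideanSpace ℂ (Fin (n + 1)) :=
  WithLp.toLp 2 (Fin.cons (c : ℂ) fun i => (t i : ℂ) * Complex.I)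

@[simp] lemma saElem_apply_zero (c : ℝ) (t : EuclideanSpace ℝ (Fin n)) : saElem c t 0 = c := rfl

@[simp] lemma saElem_apply_succ (c : ℝ) (t : EuclideanSpace ℝ (Fin n)) (i : Fin n) :
    saElem c t i.succ = t i * Complex.I := rfl

lemma one_eq_saElem : (stdSpinFactor n).one = saElem 1 0 := by
  ext i; cases i using Fin.cases <;> simp [stdSpinFactor]

lemma saElem_zero : saElem 0 (0 : EuclideanSpace ℝ (Fin n)) = 0 := by
  ext i; cases i using Fin.cases <;> simp

lemma saElem_sub (c c' : ℝ) (t t' : EuclideanSpace ℝ (Fin n)) :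
    saElem c t - saElem c' t' = saElem (c - c') (t - t') := by
  ext i; cases i using Fin.cases <;> simp [sub_mul]

lemma saElem_inj {c c' : ℝ} {t t' : EuclideanSpace ℝ (Fin n)} :
    saElem c t = saElem c' t' ↔ c = c' ∧ t = t' := by
  refine ⟨fun h => ⟨?_, ?_⟩, fun h => by rw [h.1, h.2]⟩
  · simpa using congr($h 0)
  · ext i; simpa using congr(($h i.succ).im)

lemma conj_saElem (c : ℝ) (t : EuclideanSpace ℝ (Fin n)) :
    (stdSpinFactor n).conj (saElem c t) = saElem c (-t) := by
  ext i; cases i using Fin.cases <;> simp [stdSpinFactor]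

lemma inner_one_left (a : EuclideanSpace ℂ (Fin (n + 1))) :
    inner ℂ (stdSpinFactor n).one a = a 0 := by
  simp [stdSpinFactor, EuclideanSpace.inner_single_left]

lemma inner_one_right (a : EuclideanSpace ℂ (Fin (n + 1))) :
    inner ℂ a (stdSpinFactor n).one = star (a 0) := by
  simp [stdSpinFactor, EuclideanSpace.inner_single_right]

lemma jstar_apply_zero (a : EuclideanSpace ℂ (Fin (n + 1))) :
    (stdSpinFactor n).jstar a 0 = star (a 0) := by
  rw [SpinFactor.jstar, inner_one_right]
  simp [stdSpinFactor]
  ring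

lemma jstar_apply_succ (a : EuclideanSpace ℂ (Fin (n + 1))) (i : Fin n) :
    (stdSpinFactor n).jstar a i.succ = -star (a i.succ) := by
  simp [SpinFactor.jstar, stdSpinFactor]

lemma inner_saElem_saElem (c c' : ℝ) (t t' : EuclideanSpace ℝ (Fin n)) :
    inner ℂ (saElem c t) (saElem c' t') = ((c * c' + inner ℝ t t' : ℝ) : ℂ) := by
  simp only [PiLp.inner_apply, Fin.sum_univ_succ, saElem_apply_zero, saElem_apply_succ,
    RCLike.inner_apply, map_mul, Complex.conj_ofReal, Complex.conj_I]
  have hI (x y : ℂ) : x * Complex.I * (y * -Complex.I) = x * y := by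
    linear_combination (-(x * y)) * Complex.I_sq
  push_cast
  simp only [hI, conj_trivial]
  ring

lemma jmul_saElem (c c' : ℝ) (t t' : EuclideanSpace ℝ (Fin n)) :
    (stdSpinFactor n).jmul (saElem c t) (saElem c' t') =
      saElem (c * c' + inner ℝ t t') (c • t' + c' • t) := by
  rw [SpinFactor.jmul, inner_one_left, inner_one_left, conj_saElem, inner_saElem_saElem,
    one_eq_saElem]
  ext i; cases i using Fin.cases <;> simp [real_inner_comm] <;> ring

lemma jstar_saElem (c : ℝ) (t : EuclideanSpace ℝ (Fin n)) :
    (stdSpinFactor n).jstar (saElem c t) = saElem c t := by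
  ext i; cases i using Fin.cases <;> simp [jstar_apply_zero, jstar_apply_succ]

lemma jstar_eq_self_iff {a : EuclideanSpace ℂ (Fin (n + 1))} :
    (stdSpinFactor n).jstar a = a ↔ ∃ c t, a = saElem c t := by
  refine ⟨fun h => ⟨(a 0).re, WithLp.toLp 2 fun i => (a i.succ).im, ?_⟩, ?_⟩
  · ext i; cases i using Fin.cases with
    | zero =>
      have h0 : star (a 0) = a 0 := by rw [← jstar_apply_zero, h]
      simpa using (Complex.conj_eq_iff_re.mp h0).symm
    | succ i =>
      have hi : -star (a i.succ) = a i.succ := by rw [← jstar_apply_succ, h]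
      have hre := congr(Complex.re $hi)
      apply Complex.ext <;> simp at hre ⊢
      linarith
  · rintro ⟨c, t, rfl⟩
    exact jstar_saElem c t

lemma norm_sq_saElem (c : ℝ) (t : EuclideanSpace ℝ (Fin n)) :
    ‖saElem c t‖ ^ 2 = c ^ 2 + ‖t‖ ^ 2 := by
  simp [EuclideanSpace.norm_sq_eq, Fin.sum_univ_succ]

lemma snorm_saElem (c : ℝ) (t : EuclideanSpace ℝ (Fin n)) :
    (stdSpinFactor n).snorm (saElem c t) = |c| + ‖t‖ := by
  rw [SpinFactor.snorm, norm_sq_saElem, conj_saElem, inner_saElem_saElem, inner_neg_left,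
    real_inner_self_eq_norm_sq, Complex.norm_real, Real.norm_eq_abs, sq_abs]
  have hdisc : (c ^ 2 + ‖t‖ ^ 2) ^ 2 - (c * c + -‖t‖ ^ 2) ^ 2 = (2 * |c| * ‖t‖) ^ 2 := by
    rw [mul_pow, mul_pow, sq_abs]; ring
  have hsq : c ^ 2 + ‖t‖ ^ 2 + 2 * |c| * ‖t‖ = (|c| + ‖t‖) ^ 2 := by
    rw [add_sq, sq_abs]; ring
  rw [hdisc, Real.sqrt_sq (by positivity), hsq, Real.sqrt_sq (by positivity)]

lemma isProjection_saElem_iff {c : ℝ} {t : EuclideanSpace ℝ (Fin n)} :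
    (stdSpinFactor n).IsProjection (saElem c t) ↔ c ^ 2 + ‖t‖ ^ 2 = c ∧ (2 * c) • t = t := by
  simp only [SpinFactor.IsProjection, jmul_saElem, jstar_saElem, saElem_inj,
    real_inner_self_eq_norm_sq, ← add_smul, ← two_mul, sq, and_true]

lemma isProjection_one_sub {p : EuclideanSpace ℂ (Fin (n + 1))}
    (hp : (stdSpinFactor n).IsProjection p) :
    (stdSpinFactor n).IsProjection ((stdSpinFactor n).one - p) := by
  obtain ⟨c, t, rfl⟩ := jstar_eq_self_iff.mp hp.2
  rw [isProjection_saElem_iff] at hp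
  rw [one_eq_saElem, saElem_sub, isProjection_saElem_iff, zero_sub, norm_neg, smul_neg, neg_inj]
  constructor
  · linear_combination hp.1
  · rw [mul_sub, sub_smul, hp.2]; module

lemma norm_le_of_isPos_saElem {d : ℝ} {s : EuclideanSpace ℝ (Fin n)}
    (h : (stdSpinFactor n).IsPos (saElem d s)) : ‖s‖ ≤ d := by
  obtain ⟨b, hb, hbb⟩ := h
  obtain ⟨c, t, rfl⟩ := jstar_eq_self_iff.mp hb
  -- `b ∘ b = (c² + ‖t‖²) • 1 + i (2c • t)`, and `2 |c| ‖t‖ ≤ c² + ‖t‖²`.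
  obtain ⟨rfl, rfl⟩ := saElem_inj.mp ((jmul_saElem c c t t).symm.trans hbb)
  rw [← add_smul, ← two_mul, norm_smul, Real.norm_eq_abs, abs_mul, abs_two,
    real_inner_self_eq_norm_sq]
  nlinarith [sq_nonneg (|c| - ‖t‖), sq_abs c]

noncomputable def proj :
    Bool ⊕ sphere (0 : EuclideanSpace ℝ (Fin n)) (1 / 2) → EuclideanSpace ℂ (Fin (n + 1))
  | .inl b => saElem (cond b 1 0) 0
  | .inr t => saElem (1 / 2) t

lemma isProjection_proj (k : Bool ⊕ sphere (0 : EuclideanSpace ℝ (Fin n)) (1 / 2)) :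
    (stdSpinFactor n).IsProjection (proj k) := by
  rcases k with (_ | _) | t <;> simp [proj, isProjection_saElem_iff]
  norm_num

lemma proj_injective : Function.Injective (proj (n := n)) := by
  rintro ((_ | _) | s) ((_ | _) | t) h <;> norm_num [proj, saElem_inj] at h <;>
    simp [Subtype.ext_iff, h]

lemma exists_proj_eq {p : EuclideanSpace ℂ (Fin (n + 1))} (hp : (stdSpinFactor n).IsProjection p) :
    ∃ k, proj k = p := by
  obtain ⟨c, t, rfl⟩ := jstar_eq_self_iff.mp hp.2
  obtain ⟨hc, ht⟩ := isProjection_saElem_iff.mp hp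
  by_cases ht0 : t = 0
  · subst ht0
    have : c * (c - 1) = 0 := by linear_combination (by simpa using hc : c ^ 2 = c)
    rcases mul_eq_zero.mp this with rfl | hc1
    · exact ⟨.inl false, rfl⟩
    · exact ⟨.inl true, by rw [sub_eq_zero.mp hc1]; rfl⟩
  · have hc : c = 1 / 2 := by
      have : (2 * c - 1) • t = 0 := by rw [sub_smul, ht, one_smul, sub_self]
      linarith [(smul_eq_zero.mp this).resolve_right ht0]
    subst hc
    have hnorm : ‖t‖ = 1 / 2 := by
      nlinarith [norm_nonneg t]
    exact ⟨.inr ⟨t, by simpa using hnorm⟩, rfl⟩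

lemma isPos_proj_sub_proj_iff (k l : Bool ⊕ sphere (0 : EuclideanSpace ℝ (Fin n)) (1 / 2)) :
    (stdSpinFactor n).IsPos (proj l - proj k) ↔ l = k ∨ k = .inl false ∨ l = .inl true := by
  refine ⟨fun h => ?_, ?_⟩
  · rcases k with (_ | _) | s <;> rcases l with (_ | _) | t <;>
      simp only [proj, saElem_sub, cond_true, cond_false] at h <;>
      have := norm_le_of_isPos_saElem h <;> norm_num at this <;>
      simp_all [sub_eq_zero, Subtype.ext_iff]
  · rintro (rfl | rfl | rfl)
    · rw [sub_self, ← saElem_zero]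
      exact (isProjection_proj (.inl false)).isPos
    · rw [proj, cond_false, saElem_zero, sub_zero]
      exact (isProjection_proj l).isPos
    · rw [proj, cond_true, ← one_eq_saElem]
      exact (isProjection_one_sub (isProjection_proj k)).isPos

lemma snorm_proj_sub_proj_eq_one_iff
    (k l : Bool ⊕ sphere (0 : EuclideanSpace ℝ (Fin n)) (1 / 2)) :
    (stdSpinFactor n).snorm (proj k - proj l) = 1 ↔ IsDiametral k l := by
  rcases k with (_ | _) | s <;> rcases l with (_ | _) | t <;>
    simp only [proj, saElem_sub, snorm_saElem, IsDiametral, cond_true, cond_false] <;> norm_num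
  rw [← norm_sub_eq_two_mul_iff_eq_neg]
  norm_num

noncomputable def projEquiv (n : ℕ) :
    Bool ⊕ sphere (0 : EuclideanSpace ℝ (Fin n)) (1 / 2) ≃
      {p : EuclideanSpace ℂ (Fin (n + 1)) // (stdSpinFactor n).IsProjection p} :=
  Equiv.ofBijective (fun k => ⟨proj k, isProjection_proj k⟩)
    ⟨fun _ _ h => proj_injective congr(Subtype.val $h),
      fun p => (exists_proj_eq p.2).imp fun _ h => Subtype.ext h⟩

@[simp] lemma coe_projEquiv (k : Bool ⊕ sphere (0 : EuclideanSpace ℝ (Fin n)) (1 / 2)) :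
    (projEquiv n k : EuclideanSpace ℂ (Fin (n + 1))) = proj k := rfl

end stdSpinFactor

/-- There exist spin factors of dimensions `3` and `4`, necessarily not Jordan
`*`-isomorphic, together with an order isomorphism between their projection lattices
preserving points at diametrical distance in both directions. -/
theorem exists_spin_counterexample :
    ∃ (S : SpinFactor (EuclideanSpace ℂ (Fin 3))) (T : SpinFactor (EuclideanSpace ℂ (Fin 4)))
      (Θ : {p : EuclideanSpace ℂ (Fin 3) // S.IsProjection p} →
        {q : EuclideanSpace ℂ (Fin 4) // T.IsProjection q}),
      (¬ ∃ f : EuclideanSpace ℂ (Fin 3) ≃ₗ[ℂ] EuclideanSpace ℂ (Fin 4),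
          (∀ a b, f (S.jmul a b) = T.jmul (f a) (f b)) ∧
          (∀ a, f (S.jstar a) = T.jstar (f a))) ∧
      Function.Bijective Θ ∧
      (∀ p q : {p : EuclideanSpace ℂ (Fin 3) // S.IsProjection p},
        S.IsPos (q.1 - p.1) ↔ T.IsPos ((Θ q).1 - (Θ p).1)) ∧
      (∀ p q : {p : EuclideanSpace ℂ (Fin 3) // S.IsProjection p},
        S.snorm (p.1 - q.1) = 1 ↔ T.snorm ((Θ p).1 - (Θ q).1) = 1) := by
  obtain ⟨φ, hφ⟩ := exists_equiv_sphere_neg_comm (m := 2) (n := 3) le_rfl (by norm_num)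
    (by norm_num : (0 : ℝ) < 1 / 2)
  let Φ := Equiv.sumCongr (Equiv.refl Bool) φ
  refine ⟨stdSpinFactor 2, stdSpinFactor 3,
    (stdSpinFactor.projEquiv 2).symm.trans (Φ.trans (stdSpinFactor.projEquiv 3)), ?_,
    Equiv.bijective _, fun p q => ?_, fun p q => ?_⟩
  · rintro ⟨f, -⟩
    simpa using f.finrank_eq
  all_goals
    obtain ⟨k, rfl⟩ := (stdSpinFactor.projEquiv 2).surjective p
    obtain ⟨l, rfl⟩ := (stdSpinFactor.projEquiv 2).surjective q
    simp only [Equiv.trans_apply, Equiv.symm_apply_apply, stdSpinFactor.coe_projEquiv]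
  · rw [stdSpinFactor.isPos_proj_sub_proj_iff, stdSpinFactor.isPos_proj_sub_proj_iff,
      Φ.apply_eq_iff_eq, sumCongr_refl_eq_inl_iff, sumCongr_refl_eq_inl_iff]
  · rw [stdSpinFactor.snorm_proj_sub_proj_eq_one_iff, stdSpinFactor.snorm_proj_sub_proj_eq_one_iff,
      isDiametral_sumCongr φ hφ]
end

section
/- Let H, K be real Hilbert spaces of dimension at least 1 and let T be a surjective isometry between their unit spheres. Then T extends to a surjective real-linear isometry from H onto K (Tingley's problem for Hilbert spaces). -/
/-!
Polarization turns the isometry `T` of the unit spheres into a map preserving inner products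
of unit vectors. Its positively homogeneous extension `x ↦ ‖x‖ • T (x / ‖x‖)` then preserves
all inner products, and a map preserving inner products is linear, because
`‖f (x + y) - f x - f y‖²` and `‖f (c • x) - c • f x‖²` expand into inner products of the
arguments only, where they vanish. Surjectivity on the sphere gives surjectivity by scaling.
-/

open scoped InnerProductSpace RealInnerProductSpace

section InnerPreserving

variable {𝕜 E F : Type*} [RCLike 𝕜]
  [NormedAddCommGroup E] [InnerProductSpace 𝕜 E] [NormedAddCommGroup F] [InnerProductSpace 𝕜 F]
  {f : E → F}

theorem map_add_of_inner_map_map (hf : ∀ x y, ⟪f x, f y⟫_𝕜 = ⟪x, y⟫_𝕜) (x y : E) :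
    f (x + y) = f x + f y := by
  rw [← sub_eq_zero, ← inner_self_eq_zero (𝕜 := 𝕜)]
  simp only [inner_sub_left, inner_sub_right, inner_add_left, inner_add_right, hf]
  ring

theorem map_smul_of_inner_map_map (hf : ∀ x y, ⟪f x, f y⟫_𝕜 = ⟪x, y⟫_𝕜) (c : 𝕜) (x : E) :
    f (c • x) = c • f x := by
  rw [← sub_eq_zero, ← inner_self_eq_zero (𝕜 := 𝕜)]
  simp only [inner_sub_left, inner_sub_right, inner_smul_left, inner_smul_right, hf]
  ring

variable (f) in
def LinearIsometry.ofInnerMapMap (hf : ∀ x y, ⟪f x, f y⟫_𝕜 = ⟪x, y⟫_𝕜) : E →ₗᵢ[𝕜] F :=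
  LinearMap.isometryOfInner
    { toFun := f
      map_add' := map_add_of_inner_map_map hf
      map_smul' := map_smul_of_inner_map_map hf } hf

end InnerPreserving

theorem norm_inv_norm_smul_self {F : Type*} [NormedAddCommGroup F] [NormedSpace ℝ F] {y : F}
    (hy : y ≠ 0) : ‖‖y‖⁻¹ • y‖ = 1 := by
  rw [norm_smul, norm_inv, norm_norm, inv_mul_cancel₀ (norm_ne_zero_iff.2 hy)]

theorem LinearMap.surjective_of_sphere_subset_range {E F : Type*}
    [AddCommGroup E] [Module ℝ E] [NormedAddCommGroup F] [NormedSpace ℝ F]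
    (L : E →ₗ[ℝ] F) (h : ∀ y : F, ‖y‖ = 1 → ∃ x, L x = y) : Function.Surjective L := by
  intro y
  rcases eq_or_ne y 0 with rfl | hy
  · exact ⟨0, map_zero L⟩
  obtain ⟨x, hx⟩ := h (‖y‖⁻¹ • y) (norm_inv_norm_smul_self hy)
  refine ⟨‖y‖ • x, ?_⟩
  rw [map_smul, hx, smul_inv_smul₀ (norm_ne_zero_iff.2 hy)]

section Sphere

variable {E F : Type*} [NormedAddCommGroup E] [InnerProductSpace ℝ E]
  [NormedAddCommGroup F] [InnerProductSpace ℝ F] {T : E → F}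

theorem inner_map_map_of_norm_sub_eq_on_sphere (hmaps : ∀ x : E, ‖x‖ = 1 → ‖T x‖ = 1)
    (hiso : ∀ x y : E, ‖x‖ = 1 → ‖y‖ = 1 → ‖T x - T y‖ = ‖x - y‖) (x y : E)
    (hx : ‖x‖ = 1) (hy : ‖y‖ = 1) : ⟪T x, T y⟫ = ⟪x, y⟫ := by
  have h := congrArg (· ^ 2) (hiso x y hx hy)
  simp only [norm_sub_sq_real, hmaps x hx, hmaps y hy, hx, hy] at h
  linarith

variable (T) in
/-- At `x = 0` the factor `‖x‖ = 0` makes the value `0`, whatever the junk value `T 0` is. -/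
noncomputable def radialExtension (x : E) : F := ‖x‖ • T (‖x‖⁻¹ • x)

theorem radialExtension_of_norm_eq_one {x : E} (hx : ‖x‖ = 1) : radialExtension T x = T x := by
  simp [radialExtension, hx]

theorem inner_radialExtension (hT : ∀ x y : E, ‖x‖ = 1 → ‖y‖ = 1 → ⟪T x, T y⟫ = ⟪x, y⟫)
    (x y : E) : ⟪radialExtension T x, radialExtension T y⟫ = ⟪x, y⟫ := by
  rcases eq_or_ne x 0 with rfl | hx
  · simp [radialExtension]
  rcases eq_or_ne y 0 with rfl | hy
  · simp [radialExtension]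
  rw [radialExtension, radialExtension, real_inner_smul_left, real_inner_smul_right,
    hT _ _ (norm_inv_norm_smul_self hx) (norm_inv_norm_smul_self hy), real_inner_smul_left,
    real_inner_smul_right]
  field_simp

end Sphere

theorem tingley_real_hilbert_general {H K : Type*}
    [NormedAddCommGroup H] [InnerProductSpace ℝ H]
    [NormedAddCommGroup K] [InnerProductSpace ℝ K]
    (T : H → K) (hmaps : ∀ x : H, ‖x‖ = 1 → ‖T x‖ = 1)
    (hsurj : ∀ y : K, ‖y‖ = 1 → ∃ x : H, ‖x‖ = 1 ∧ T x = y)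
    (hiso : ∀ x y : H, ‖x‖ = 1 → ‖y‖ = 1 → ‖T x - T y‖ = ‖x - y‖) :
    ∃ L : H →ₗᵢ[ℝ] K, Function.Surjective L ∧ ∀ x : H, ‖x‖ = 1 → L x = T x := by
  let L := LinearIsometry.ofInnerMapMap (radialExtension T)
    (inner_radialExtension (inner_map_map_of_norm_sub_eq_on_sphere hmaps hiso))
  have hL : ∀ x : H, ‖x‖ = 1 → L x = T x := fun _ hx => radialExtension_of_norm_eq_one hx
  refine ⟨L, L.toLinearMap.surjective_of_sphere_subset_range fun y hy => ?_, hL⟩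
  obtain ⟨x, hx, rfl⟩ := hsurj y hy
  exact ⟨x, hL x hx⟩

/-- Tingley's problem for real Hilbert spaces (Ding): every surjective isometry between
the unit spheres of two real Hilbert spaces (of dimension at least one) extends to a
surjective real-linear isometry. -/
theorem tingley_real_hilbert {H K : Type*}
    [NormedAddCommGroup H] [InnerProductSpace ℝ H] [CompleteSpace H] [Nontrivial H]
    [NormedAddCommGroup K] [InnerProductSpace ℝ K] [CompleteSpace K] [Nontrivial K]
    (T : H → K) (hmaps : ∀ x : H, ‖x‖ = 1 → ‖T x‖ = 1)
    (hsurj : ∀ y : K, ‖y‖ = 1 → ∃ x : H, ‖x‖ = 1 ∧ T x = y)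
    (hiso : ∀ x y : H, ‖x‖ = 1 → ‖y‖ = 1 → ‖T x - T y‖ = ‖x - y‖) :
    ∃ L : H →ₗᵢ[ℝ] K, Function.Surjective L ∧ ∀ x : H, ‖x‖ = 1 → L x = T x :=
  tingley_real_hilbert_general T hmaps hsurj hiso
end

section
/- Let X and Y be real Banach spaces, let B ⊆ X and C ⊆ Y be closed convex sets with nonempty interior, and let f : B → C be a surjective isometry. Then f extends to a bijective affine isometry from X onto Y (Mankiewicz's theorem). In particular, if moreover 0 ∈ B and f(0) = 0, the extension is a surjective linear isometry. -/
/-!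
Pick `a ∈ B` with `closedBall a r ⊆ B` and `closedBall (f a) r ⊆ C`. For `u, v` near `a`, `f` maps
the lens `{x | dist x u ≤ dist u v, dist x v ≤ dist u v}` isometrically onto the lens of `f u, f v`;
both lenses are symmetric about the midpoints, so Väisälä's reflection argument behind Mazur–Ulam
shows that `f` preserves midpoints near `a`. An isometry that preserves midpoints on a ball extends,
by dyadic rescaling, to a linear isometry; it is onto because its range contains a ball. This gives
an affine isometry `g` of `X` onto `Y` equal to `f` near `a`.

It remains to show that the isometry `F = g⁻¹ ∘ f` of `B`, which is the identity near `a`, is the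
identity on `B`. In a general normed space, a point at distance at most `3e/2` from the centre of a
ball of radius `e` is determined by its distances to the points of that ball, so the set where `F`
is locally the identity grows; being open and relatively closed in the connected set `interior B`,
it contains `interior B`, and `B` lies in the closure of `interior B`.
-/

open Set Metric

theorem Set.OrdConnected.exists_neg_mem_not_iff {S : Set ℝ} (hS : S.OrdConnected)
    (hSc : IsCompact S) (h0 : 0 ∈ S) (h1 : -1 ∈ S) {c : ℝ} (hc : 2 ≤ c) :
    ∃ τ, -τ ∈ S ∧ ¬(c * τ ∈ S ↔ c * τ - 1 ∈ S) := by
  -- With `S = [p, q]`, the shift at `τ = (q + 1) / c` resp. `τ = p / c` would put `q + 1` resp.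
  -- `p - 1` into `S`; so `-c p < q + 1` and `c q < -p`, which is impossible for `c ≥ 2`.
  by_contra! hshift
  obtain ⟨q, hqS, hq⟩ := hSc.exists_isGreatest ⟨0, h0⟩
  obtain ⟨p, hpS, hp⟩ := hSc.exists_isLeast ⟨0, h0⟩
  have hq0 : 0 ≤ q := hq h0
  have hp1 : p ≤ -1 := hp h1
  have hc0 : c ≠ 0 := by positivity
  have hmem : ∀ s, p ≤ s → s ≤ q → s ∈ S := fun s h h' => hS.out hpS hqS ⟨h, h'⟩
  have hright : -(c * p) < q + 1 := by
    by_contra! h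
    have hτ : -((q + 1) / c) ∈ S := hmem _
      (by rw [le_neg, div_le_iff₀ (by positivity)]; linarith)
      (by have : 0 ≤ (q + 1) / c := by positivity
          linarith)
    have := (hshift _ hτ).2 (by rwa [mul_div_cancel₀ _ hc0, add_sub_cancel_right])
    rw [mul_div_cancel₀ _ hc0] at this
    linarith [hq this]
  have hleft : c * q < -p := by
    by_contra! h
    have hτ : -(p / c) ∈ S := hmem _
      (by have : p / c ≤ 0 := div_nonpos_of_nonpos_of_nonneg (by linarith) (by positivity)
          linarith)
      (by rw [neg_le, le_div_iff₀ (by positivity)]; linarith)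
    have := (hshift _ hτ).1 (by rwa [mul_div_cancel₀ _ hc0])
    rw [mul_div_cancel₀ _ hc0] at this
    linarith [hp this]
  nlinarith

section Rigidity

variable {X : Type*} [NormedAddCommGroup X] [NormedSpace ℝ X]

theorem isCompact_setOf_norm_add_smul_le (p : X) {w : X} (hw : w ≠ 0) (r : ℝ) :
    IsCompact {s : ℝ | ‖p + s • w‖ ≤ r} := by
  refine isCompact_of_isClosed_isBounded (isClosed_le (by fun_prop) continuous_const) ?_
  refine (isBounded_closedBall (x := 0) (r := (r + ‖p‖) / ‖w‖)).subset fun s hs => ?_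
  have hw0 : 0 < ‖w‖ := norm_pos_iff.2 hw
  rw [mem_closedBall_zero_iff, Real.norm_eq_abs, le_div_iff₀ hw0, ← Real.norm_eq_abs, ← norm_smul]
  calc ‖s • w‖ = ‖(p + s • w) - p‖ := by rw [add_sub_cancel_left]
    _ ≤ ‖p + s • w‖ + ‖p‖ := norm_sub_le _ _
    _ ≤ r + ‖p‖ := by gcongr; exact hs

theorem ordConnected_setOf_norm_add_smul_le (p w : X) (r : ℝ) :
    OrdConnected {s : ℝ | ‖p + s • w‖ ≤ r} := by
  have hline : {s : ℝ | ‖p + s • w‖ ≤ r} = AffineMap.lineMap p (p + w) ⁻¹' closedBall 0 r := by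
    ext s
    rw [mem_preimage, mem_closedBall_zero_iff, AffineMap.lineMap_apply_module]
    exact iff_of_eq (congrArg (‖·‖ ≤ r) (by module))
  rw [hline]
  exact ((convex_closedBall 0 r).affine_preimage _).ordConnected

theorem eq_of_forall_norm_sub_eq {e : ℝ} (he : 0 < e) {u y : X} (hu : ‖u‖ ≤ 3 / 2 * e)
    (H : ∀ z, ‖z‖ ≤ e → ‖y - z‖ = ‖u - z‖) : y = u := by
  rcases le_or_gt ‖u‖ e with hue | hue
  · simpa [sub_eq_zero] using H u hue
  by_contra hyu
  obtain ⟨d, hd0, hde, hud⟩ : ∃ d, 0 < d ∧ d ≤ e / 2 ∧ ‖u‖ = e + d :=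
    ⟨‖u‖ - e, by linarith, by linarith, by ring⟩
  obtain ⟨p, hp, rfl⟩ : ∃ p : X, ‖p‖ = 1 ∧ u = (e + d) • p := by
    have hu0 : ‖u‖ ≠ 0 := by linarith
    exact ⟨‖u‖⁻¹ • u, by rw [norm_smul, norm_inv, norm_norm, inv_mul_cancel₀ hu0],
      by rw [smul_smul, ← hud, mul_inv_cancel₀ hu0, one_smul]⟩
  obtain ⟨w, hw, rfl⟩ : ∃ w : X, w ≠ 0 ∧ y = (e + d) • p - d • w :=
    ⟨d⁻¹ • ((e + d) • p - y), smul_ne_zero (inv_ne_zero hd0.ne') (sub_ne_zero.2 (Ne.symm hyu)),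
      by rw [smul_smul, mul_inv_cancel₀ hd0.ne', one_smul, sub_sub_cancel]⟩
  -- `H` at `z = e • (p - τ • w)` says `‖p + (c * τ - 1) • w‖ = ‖p + (c * τ) • w‖`, `c = e / d`
  have hshift : ∀ τ, ‖p + (-τ) • w‖ ≤ 1 → ‖p + (e / d * τ) • w‖ = ‖p + (e / d * τ - 1) • w‖ := by
    intro τ hτ
    have hz : ‖e • (p + (-τ) • w)‖ ≤ e := by
      rw [norm_smul, Real.norm_of_nonneg he.le]
      exact mul_le_of_le_one_right he.le hτ
    have hed : d * (e / d * τ) = e * τ := by field_simp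
    have := H _ hz
    rw [show (e + d) • p - e • (p + (-τ) • w) = d • (p + (e / d * τ) • w) by
        rw [smul_add d, smul_smul d, hed]; module,
      show (e + d) • p - d • w - e • (p + (-τ) • w) = d • (p + (e / d * τ - 1) • w) by
        rw [smul_add d, smul_smul d, mul_sub d, hed]; module,
      norm_smul, norm_smul, Real.norm_of_nonneg hd0.le] at this
    exact (mul_left_cancel₀ hd0.ne' this).symm
  have h1 : ‖p + (-1 : ℝ) • w‖ ≤ 1 := by
    have hep : ‖e • p‖ ≤ e := by rw [norm_smul, hp, Real.norm_of_nonneg he.le, mul_one]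
    have := H _ hep
    rw [show (e + d) • p - d • w - e • p = d • (p + (-1 : ℝ) • w) by module,
      show (e + d) • p - e • p = d • p by module, norm_smul, norm_smul, hp,
      Real.norm_of_nonneg hd0.le] at this
    exact (mul_left_cancel₀ hd0.ne' this).le
  obtain ⟨τ, hτ, hne⟩ := (ordConnected_setOf_norm_add_smul_le p w 1).exists_neg_mem_not_iff
    (isCompact_setOf_norm_add_smul_le p hw 1) (by simp [hp]) h1 (c := e / d)
    (by rw [le_div_iff₀ hd0]; linarith)
  exact hne (by rw [mem_ofPred_eq, mem_ofPred_eq, hshift τ hτ])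

end Rigidity

theorem continuousOn_of_forall_dist_eq {α β : Type*} [PseudoMetricSpace α] [PseudoMetricSpace β]
    {f : α → β} {s : Set α} (hf : ∀ x ∈ s, ∀ y ∈ s, dist (f x) (f y) = dist x y) :
    ContinuousOn f s :=
  (LipschitzOnWith.of_dist_le_mul (K := 1) fun x hx y hy => by
    rw [hf x hx y hy, NNReal.coe_one, one_mul]).continuousOn

section Propagation

variable {X : Type*} [NormedAddCommGroup X] [NormedSpace ℝ X] {B : Set X} {F : X → X}

theorem apply_eq_self_of_eqOn_id_closedBall
    (hF : ∀ x ∈ B, ∀ y ∈ B, dist (F x) (F y) = dist x y) {c : X} {e : ℝ} (he : 0 < e)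
    (hcB : closedBall c e ⊆ B) (hFc : EqOn F id (closedBall c e)) {u : X} (hu : u ∈ B)
    (huc : dist u c ≤ 3 / 2 * e) : F u = u := by
  have H : ∀ z : X, ‖z‖ ≤ e → ‖(F u - c) - z‖ = ‖(u - c) - z‖ := by
    intro z hz
    have hzc : c + z ∈ closedBall c e := by rwa [mem_closedBall, dist_eq_norm, add_sub_cancel_left]
    have := hF u hu (c + z) (hcB hzc)
    rwa [hFc hzc, id, dist_eq_norm, dist_eq_norm, sub_add_eq_sub_sub_swap,
      sub_add_eq_sub_sub_swap, sub_right_comm (F u), sub_right_comm u] at this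
  simpa using eq_of_forall_norm_sub_eq he (by rwa [← dist_eq_norm]) H

theorem eqOn_id_closedBall_of_eqOn_id_closedBall
    (hF : ∀ x ∈ B, ∀ y ∈ B, dist (F x) (F y) = dist x y) {c : X} {r R : ℝ} (hr : 0 < r)
    (hFc : EqOn F id (closedBall c r)) (hcB : closedBall c R ⊆ B) :
    EqOn F id (closedBall c R) := by
  rcases le_total R r with hRr | hrR
  · exact hFc.mono (closedBall_subset_closedBall hRr)
  have hgrow : ∀ n : ℕ, EqOn F id (closedBall c (min ((3 / 2) ^ n * r) R)) := by
    intro n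
    induction n with
    | zero => exact hFc.mono (closedBall_subset_closedBall (by simp))
    | succ n ih =>
      refine fun u hu => apply_eq_self_of_eqOn_id_closedBall hF
        (lt_min (by positivity) (by linarith))
        ((closedBall_subset_closedBall (min_le_right _ _)).trans hcB) ih
        (hcB (closedBall_subset_closedBall (min_le_right _ _) hu)) ((mem_closedBall.1 hu).trans ?_)
      rw [mul_min_of_nonneg _ _ (by norm_num), pow_succ]
      exact min_le_min (by linarith) (by linarith)
  obtain ⟨n, hn⟩ := pow_unbounded_of_one_lt (R / r) (by norm_num : (1 : ℝ) < 3 / 2)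
  rw [div_lt_iff₀ hr] at hn
  simpa [min_eq_right hn.le] using hgrow n

theorem eqOn_id_of_eqOn_id_closedBall (hB : Convex ℝ B)
    (hF : ∀ x ∈ B, ∀ y ∈ B, dist (F x) (F y) = dist x y) {a : X} {e : ℝ} (he : 0 < e)
    (haB : closedBall a e ⊆ B) (hFa : EqOn F id (closedBall a e)) : EqOn F id B := by
  set U := interior {x ∈ B | F x = x}
  have hsub : ∀ {x : X} {ε : ℝ}, closedBall x ε ⊆ B → EqOn F id (closedBall x ε) →
      closedBall x ε ⊆ {x ∈ B | F x = x} := fun hB hF _ hy => ⟨hB hy, hF hy⟩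
  have haU : a ∈ U := mem_interior.2 ⟨ball a e, ball_subset_closedBall.trans (hsub haB hFa),
    isOpen_ball, mem_ball_self he⟩
  have haB' : a ∈ interior B := interior_mono (sep_subset _ _) haU
  have hint : interior B ⊆ U := by
    refine hB.interior.isPreconnected.subset_of_closure_inter_subset isOpen_interior
      ⟨a, haB', haU⟩ ?_
    rintro x ⟨hxU, hxB⟩
    obtain ⟨ε, hε, hxε⟩ := Metric.mem_nhds_iff.1 (isOpen_interior.mem_nhds hxB)
    obtain ⟨x', hx'U, hxx'⟩ := Metric.mem_closure_iff.1 hxU (ε / 4) (by positivity)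
    obtain ⟨δ, hδ, hx'δ⟩ := nhds_basis_closedBall.mem_iff.1 (isOpen_interior.mem_nhds hx'U)
    have hx'B : closedBall x' (ε / 2) ⊆ B := fun y hy => interior_subset <| hxε <| by
      rw [mem_ball]
      linarith [dist_triangle y x' x, mem_closedBall.1 hy, dist_comm x x']
    have hFx' := eqOn_id_closedBall_of_eqOn_id_closedBall hF hδ
      (fun y hy => (interior_subset (hx'δ hy)).2) hx'B
    refine mem_interior.2 ⟨ball x (ε / 4), fun y hy => hsub hx'B hFx' ?_, isOpen_ball,
      mem_ball_self (by positivity)⟩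
    rw [mem_closedBall]
    linarith [dist_triangle y x x', mem_ball.1 hy]
  have hBcl : B ⊆ closure (interior B) := by
    rw [hB.closure_interior_eq_closure_of_nonempty_interior ⟨a, haB'⟩]
    exact subset_closure
  exact EqOn.of_subset_closure (fun x hx => (interior_subset (hint hx)).2)
    (continuousOn_of_forall_dist_eq hF)
    continuousOn_id interior_subset hBcl

end Propagation

noncomputable def Set.BijOn.isometryEquiv {α β : Type*} [PseudoMetricSpace α]
    [PseudoMetricSpace β] {s : Set α} {t : Set β} {f : α → β} (hf : BijOn f s t)
    (hiso : ∀ x ∈ s, ∀ y ∈ s, dist (f x) (f y) = dist x y) : s ≃ᵢ t where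
  toEquiv := hf.equiv f
  isometry_toFun := Isometry.of_dist_eq fun x y => hiso x x.2 y y.2

theorem IsometryEquiv.apply_eq_of_dist_apply_self {D : Type*} [MetricSpace D] [BoundedSpace D]
    (σ : D ≃ᵢ D) {m : D} (hσ : ∀ x, dist (σ x) x = 2 * dist x m) (h : D ≃ᵢ D) : h m = m := by
  obtain ⟨R, hR⟩ := Metric.boundedSpace_iff.1 ‹BoundedSpace D›
  have hσm : σ m = m := dist_le_zero.1 (by simp [hσ m])
  -- Väisälä's trick: `h ↦ σ ∘ h⁻¹ ∘ σ ∘ h` doubles the displacement of `m`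
  have hdouble : ∀ n : ℕ, ∀ h : D ≃ᵢ D, 2 ^ n * dist (h m) m ≤ R := by
    intro n
    induction n with
    | zero => simpa using fun h : D ≃ᵢ D => hR (h m) m
    | succ n ih =>
      intro h
      have := ih (h.trans (σ.trans (h.symm.trans σ)))
      simp only [IsometryEquiv.trans_apply] at this
      rw [← hσm, σ.dist_eq, hσm, ← h.dist_eq, h.apply_symm_apply, hσ] at this
      rwa [pow_succ, mul_assoc]
  by_contra hne
  have hpos : 0 < dist (h m) m := dist_pos.2 hne
  obtain ⟨n, hn⟩ := pow_unbounded_of_one_lt (R / dist (h m) m) one_lt_two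
  rw [div_lt_iff₀ hpos] at hn
  linarith [hdouble n h]

def lens {P : Type*} [PseudoMetricSpace P] (u v : P) : Set P :=
  closedBall u (dist u v) ∩ closedBall v (dist u v)

section Lens

variable {P Q : Type*} [PseudoMetricSpace P] [PseudoMetricSpace Q]

theorem left_mem_lens (u v : P) : u ∈ lens u v := by simp [lens]

theorem right_mem_lens (u v : P) : v ∈ lens u v := by simp [lens, dist_comm]

theorem lens_subset_closedBall {c u v : P} {s : ℝ}
    (hu : u ∈ closedBall c s) (hv : v ∈ closedBall c s) : lens u v ⊆ closedBall c (3 * s) := by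
  rintro x ⟨hxu, -⟩
  rw [mem_closedBall] at *
  linarith [dist_triangle x u c, dist_triangle_right u v c]

theorem bijOn_lens {B : Set P} {C : Set Q} {f : P → Q} (hf : BijOn f B C)
    (hiso : ∀ x ∈ B, ∀ y ∈ B, dist (f x) (f y) = dist x y) {u v : P} (huv : lens u v ⊆ B)
    (hfuv : lens (f u) (f v) ⊆ C) : BijOn f (lens u v) (lens (f u) (f v)) := by
  have hu := huv (left_mem_lens u v)
  have hv := huv (right_mem_lens u v)
  have hmem : ∀ x ∈ B, f x ∈ lens (f u) (f v) ↔ x ∈ lens u v := by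
    intro x hx
    simp only [lens, mem_inter_iff, mem_closedBall, hiso x hx _ hu, hiso x hx _ hv, hiso u hu v hv]
  refine ⟨fun x hx => (hmem x (huv hx)).2 hx, hf.injOn.mono huv, fun y hy => ?_⟩
  obtain ⟨x, hx, rfl⟩ := hf.surjOn (hfuv hy)
  exact ⟨x, (hmem x hx).1 hy, rfl⟩

end Lens

theorem exists_closedBall_subset_and_closedBall_image_subset {X Y : Type*}
    [NormedAddCommGroup X] [NormedSpace ℝ X] [PseudoMetricSpace Y] {B : Set X} {C : Set Y}
    {f : X → Y} (hB : Convex ℝ B) (hBi : (interior B).Nonempty) (hCi : (interior C).Nonempty)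
    (hf : SurjOn f B C) (hfc : ContinuousOn f B) :
    ∃ a r, 0 < r ∧ closedBall a r ⊆ B ∧ closedBall (f a) r ⊆ C := by
  obtain ⟨c, hc⟩ := hCi
  obtain ⟨ε, hε, hcε⟩ := Metric.isOpen_iff.1 isOpen_interior c hc
  obtain ⟨x, hx, rfl⟩ := hf (interior_subset hc)
  obtain ⟨δ, hδ, hδf⟩ := Metric.continuousWithinAt_iff.1 (hfc x hx) (ε / 2) (by positivity)
  have hxcl : x ∈ closure (interior B) := by
    rw [hB.closure_interior_eq_closure_of_nonempty_interior hBi]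
    exact subset_closure hx
  obtain ⟨a, haB, hxa⟩ := Metric.mem_closure_iff.1 hxcl δ hδ
  obtain ⟨r, hr, hra⟩ := nhds_basis_closedBall.mem_iff.1 (isOpen_interior.mem_nhds haB)
  have hfa := hδf (interior_subset haB) (by rwa [dist_comm])
  refine ⟨a, min r (ε / 2), lt_min hr (by positivity),
    (closedBall_subset_closedBall (min_le_left _ _)).trans (hra.trans interior_subset),
    fun y hy => interior_subset (hcε ?_)⟩
  rw [mem_ball]
  linarith [dist_triangle y (f a) (f x), mem_closedBall.1 hy, min_le_right r (ε / 2)]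

section NormedSpace

variable {X Y : Type*} [NormedAddCommGroup X] [NormedSpace ℝ X]
  [NormedAddCommGroup Y] [NormedSpace ℝ Y]

theorem midpoint_mem_lens (u v : X) : midpoint ℝ u v ∈ lens u v := by
  constructor <;>
    simp only [mem_closedBall, dist_midpoint_left, dist_midpoint_right, Real.norm_two] <;>
    linarith [dist_nonneg (x := u) (y := v)]

theorem bijOn_pointReflection_lens (u v : X) :
    BijOn (AffineIsometryEquiv.pointReflection ℝ (midpoint ℝ u v)) (lens u v) (lens u v) := by
  set σ := AffineIsometryEquiv.pointReflection ℝ (midpoint ℝ u v)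
  have hmaps : MapsTo σ (lens u v) (lens u v) := by
    rintro x ⟨hxu, hxv⟩
    refine ⟨?_, ?_⟩ <;> rw [mem_closedBall] at *
    · calc dist (σ x) u = dist (σ x) (σ v) := by
            rw [AffineIsometryEquiv.pointReflection_midpoint_right]
        _ ≤ dist u v := by rwa [σ.dist_map]
    · calc dist (σ x) v = dist (σ x) (σ u) := by
            rw [AffineIsometryEquiv.pointReflection_midpoint_left]
        _ ≤ dist u v := by rwa [σ.dist_map]
  have hinv : InvOn σ σ (lens u v) (lens u v) :=
    ⟨fun x _ => AffineIsometryEquiv.pointReflection_involutive _ x,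
      fun x _ => AffineIsometryEquiv.pointReflection_involutive _ x⟩
  exact hinv.bijOn hmaps hmaps

theorem map_midpoint_of_lens_subset {B : Set X} {C : Set Y} {f : X → Y} (hf : BijOn f B C)
    (hiso : ∀ x ∈ B, ∀ y ∈ B, dist (f x) (f y) = dist x y) {u v : X} (huv : lens u v ⊆ B)
    (hfuv : lens (f u) (f v) ⊆ C) : f (midpoint ℝ u v) = midpoint ℝ (f u) (f v) := by
  have : BoundedSpace (lens u v) :=
    boundedSpace_val_set_iff.2 (isBounded_closedBall.subset inter_subset_left)
  let Φ := (bijOn_lens hf hiso huv hfuv).isometryEquiv fun x hx y hy => hiso x (huv hx) y (huv hy)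
  let σ := (bijOn_pointReflection_lens u v).isometryEquiv fun x _ y _ =>
    AffineIsometryEquiv.dist_map _ x y
  let σ' := (bijOn_pointReflection_lens (f u) (f v)).isometryEquiv fun x _ y _ =>
    AffineIsometryEquiv.dist_map _ x y
  let m : lens u v := ⟨midpoint ℝ u v, midpoint_mem_lens u v⟩
  have hσ : ∀ x, dist (σ x) x = 2 * dist x m := fun x => by
    rw [Subtype.dist_eq, Subtype.dist_eq, dist_comm (x : X)]
    exact AffineIsometryEquiv.dist_pointReflection_self_real _ _
  -- `σ ∘ Φ⁻¹ ∘ σ' ∘ Φ` is an isometry of the lens, so it fixes `m`; hence `σ'` fixes `Φ m`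
  have hm := σ.apply_eq_of_dist_apply_self hσ (Φ.trans (σ'.trans (Φ.symm.trans σ)))
  simp only [IsometryEquiv.trans_apply] at hm
  have hσm : σ m = m := dist_le_zero.1 (by rw [hσ m, dist_self, mul_zero])
  have hfixed : σ' (Φ m) = Φ m := (Φ.symm_apply_eq).1 (σ.injective (hm.trans hσm.symm))
  exact AffineIsometryEquiv.pointReflection_fixed_iff.1 (congrArg Subtype.val hfixed)

theorem midpoint_zero_left (x : X) : midpoint ℝ 0 x = (2 : ℝ)⁻¹ • x := by
  rw [midpoint_eq_smul_add, invOf_eq_inv, zero_add]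

variable {T : X → Y} {e : ℝ}

theorem inv_two_pow_smul_mem_closedBall {n : ℕ} {x : X} (hx : ‖x‖ ≤ 2 ^ n * e) :
    ((2 : ℝ) ^ n)⁻¹ • x ∈ closedBall 0 e := by
  rw [mem_closedBall_zero_iff, norm_smul, norm_inv, norm_pow, Real.norm_two,
    inv_mul_le_iff₀ (by positivity)]
  exact hx

theorem map_inv_two_pow_smul (hT0 : T 0 = 0)
    (hmid : ∀ x ∈ closedBall (0 : X) e, ∀ y ∈ closedBall (0 : X) e,
      T (midpoint ℝ x y) = midpoint ℝ (T x) (T y))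
    (n : ℕ) {w : X} (hw : w ∈ closedBall 0 e) :
    T (((2 : ℝ) ^ n)⁻¹ • w) = ((2 : ℝ) ^ n)⁻¹ • T w := by
  have he : 0 ≤ e := nonneg_of_mem_closedBall hw
  induction n with
  | zero => simp
  | succ n ih =>
    have hwn := inv_two_pow_smul_mem_closedBall (n := n) ((mem_closedBall_zero_iff.1 hw).trans
      (le_mul_of_one_le_left he (one_le_pow₀ one_le_two)))
    have hhalf : ((2 : ℝ) ^ (n + 1))⁻¹ • w = midpoint ℝ 0 (((2 : ℝ) ^ n)⁻¹ • w) := by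
      rw [midpoint_zero_left, smul_smul, ← mul_inv, ← pow_succ']
    rw [hhalf, hmid 0 (mem_closedBall_self he) _ hwn, hT0, ih, midpoint_zero_left, smul_smul, ← mul_inv, ← pow_succ']

/-- `2 ^ n • T ((2 ^ n)⁻¹ • x)` for any `n` with `‖x‖ ≤ 2 ^ n * e` (see `dyadicExtension_eq`);
`⌈‖x‖ / e⌉₊` is one such `n`. -/
noncomputable def dyadicExtension (T : X → Y) (e : ℝ) (x : X) : Y :=
  (2 : ℝ) ^ ⌈‖x‖ / e⌉₊ • T (((2 : ℝ) ^ ⌈‖x‖ / e⌉₊)⁻¹ • x)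

theorem two_pow_smul_map_inv_two_pow_smul_of_le (hT0 : T 0 = 0)
    (hmid : ∀ x ∈ closedBall (0 : X) e, ∀ y ∈ closedBall (0 : X) e,
      T (midpoint ℝ x y) = midpoint ℝ (T x) (T y))
    {m n : ℕ} (hmn : m ≤ n) {x : X} (hx : ‖x‖ ≤ 2 ^ m * e) :
    (2 : ℝ) ^ n • T (((2 : ℝ) ^ n)⁻¹ • x) = (2 : ℝ) ^ m • T (((2 : ℝ) ^ m)⁻¹ • x) := by
  obtain ⟨k, rfl⟩ := Nat.exists_eq_add_of_le hmn
  have hsplit : ((2 : ℝ) ^ (m + k))⁻¹ • x = ((2 : ℝ) ^ k)⁻¹ • ((2 : ℝ) ^ m)⁻¹ • x := by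
    rw [smul_smul, ← mul_inv, ← pow_add, add_comm]
  rw [hsplit, map_inv_two_pow_smul hT0 hmid k (inv_two_pow_smul_mem_closedBall hx), smul_smul,
    pow_add, mul_inv_cancel_right₀ (by positivity)]

theorem dyadicExtension_eq (he : 0 < e) (hT0 : T 0 = 0)
    (hmid : ∀ x ∈ closedBall (0 : X) e, ∀ y ∈ closedBall (0 : X) e,
      T (midpoint ℝ x y) = midpoint ℝ (T x) (T y))
    {n : ℕ} {x : X} (hx : ‖x‖ ≤ 2 ^ n * e) :
    dyadicExtension T e x = (2 : ℝ) ^ n • T (((2 : ℝ) ^ n)⁻¹ • x) := by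
  have hN : ‖x‖ ≤ 2 ^ ⌈‖x‖ / e⌉₊ * e := by
    rw [← div_le_iff₀ he]
    exact (Nat.le_ceil _).trans (by exact_mod_cast Nat.lt_two_pow_self.le)
  rcases le_total n ⌈‖x‖ / e⌉₊ with h | h
  · exact two_pow_smul_map_inv_two_pow_smul_of_le hT0 hmid h hx
  · exact (two_pow_smul_map_inv_two_pow_smul_of_le hT0 hmid h hN).symm

theorem exists_le_two_pow_mul (he : 0 < e) (a b : ℝ) :
    ∃ n : ℕ, a ≤ 2 ^ n * e ∧ b ≤ 2 ^ n * e := by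
  obtain ⟨n, hn⟩ := pow_unbounded_of_one_lt (max a b / e) one_lt_two
  rw [div_lt_iff₀ he] at hn
  exact ⟨n, by linarith [le_max_left a b], by linarith [le_max_right a b]⟩

theorem dist_dyadicExtension (he : 0 < e) (hT0 : T 0 = 0)
    (hiso : ∀ x ∈ closedBall (0 : X) e, ∀ y ∈ closedBall (0 : X) e, dist (T x) (T y) = dist x y)
    (hmid : ∀ x ∈ closedBall (0 : X) e, ∀ y ∈ closedBall (0 : X) e,
      T (midpoint ℝ x y) = midpoint ℝ (T x) (T y)) (x y : X) :
    dist (dyadicExtension T e x) (dyadicExtension T e y) = dist x y := by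
  obtain ⟨n, hx, hy⟩ := exists_le_two_pow_mul he ‖x‖ ‖y‖
  rw [dyadicExtension_eq he hT0 hmid hx, dyadicExtension_eq he hT0 hmid hy, dist_smul₀,
    hiso _ (inv_two_pow_smul_mem_closedBall hx) _ (inv_two_pow_smul_mem_closedBall hy),
    dist_smul₀, ← mul_assoc, norm_inv, mul_inv_cancel₀ (by simp), one_mul]

theorem dyadicExtension_midpoint (he : 0 < e) (hT0 : T 0 = 0)
    (hmid : ∀ x ∈ closedBall (0 : X) e, ∀ y ∈ closedBall (0 : X) e,
      T (midpoint ℝ x y) = midpoint ℝ (T x) (T y)) (x y : X) :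
    dyadicExtension T e (midpoint ℝ x y) =
      midpoint ℝ (dyadicExtension T e x) (dyadicExtension T e y) := by
  obtain ⟨n, hx, hy⟩ := exists_le_two_pow_mul he ‖x‖ ‖y‖
  have hxy : ‖midpoint ℝ x y‖ ≤ 2 ^ n * e := by
    rw [midpoint_eq_smul_add, invOf_eq_inv, norm_smul, norm_inv, Real.norm_two]
    linarith [norm_add_le x y]
  have hsmul : ((2 : ℝ) ^ n)⁻¹ • midpoint ℝ x y =
      midpoint ℝ (((2 : ℝ) ^ n)⁻¹ • x) (((2 : ℝ) ^ n)⁻¹ • y) := by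
    simp only [midpoint_eq_smul_add, invOf_eq_inv]
    module
  rw [dyadicExtension_eq he hT0 hmid hxy, dyadicExtension_eq he hT0 hmid hx,
    dyadicExtension_eq he hT0 hmid hy, hsmul,
    hmid _ (inv_two_pow_smul_mem_closedBall hx) _ (inv_two_pow_smul_mem_closedBall hy)]
  simp only [midpoint_eq_smul_add, invOf_eq_inv]
  module

theorem exists_linearIsometry_eqOn_closedBall (he : 0 < e) (hT0 : T 0 = 0)
    (hiso : ∀ x ∈ closedBall (0 : X) e, ∀ y ∈ closedBall (0 : X) e, dist (T x) (T y) = dist x y)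
    (hmid : ∀ x ∈ closedBall (0 : X) e, ∀ y ∈ closedBall (0 : X) e,
      T (midpoint ℝ x y) = midpoint ℝ (T x) (T y)) :
    ∃ L : X →ₗᵢ[ℝ] Y, EqOn L T (closedBall 0 e) := by
  have hsmall : ∀ x ∈ closedBall (0 : X) e, dyadicExtension T e x = T x := fun x hx => by
    simpa using dyadicExtension_eq (n := 0) he hT0 hmid (by simpa using hx)
  have hL0 : dyadicExtension T e 0 = 0 := (hsmall 0 (mem_closedBall_self he.le)).trans hT0
  have hLiso := dist_dyadicExtension he hT0 hiso hmid
  let Λ := (AddMonoidHom.ofMapMidpoint ℝ ℝ _ hL0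
    (dyadicExtension_midpoint he hT0 hmid)).toRealLinearMap (Isometry.of_dist_eq hLiso).continuous
  refine ⟨{ Λ.toLinearMap with norm_map' := fun x => ?_ }, hsmall⟩
  change ‖dyadicExtension T e x‖ = ‖x‖
  simpa [hL0] using hLiso x 0

theorem exists_linearIsometry_map_sub_eq {a : X} (he : 0 < e)
    (hiso : ∀ x ∈ closedBall a e, ∀ y ∈ closedBall a e, dist (T x) (T y) = dist x y)
    (hmid : ∀ x ∈ closedBall a e, ∀ y ∈ closedBall a e,
      T (midpoint ℝ x y) = midpoint ℝ (T x) (T y)) :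
    ∃ L : X →ₗᵢ[ℝ] Y, ∀ x ∈ closedBall a e, L (x - a) = T x - T a := by
  have hmem : ∀ {w : X}, w ∈ closedBall 0 e → a + w ∈ closedBall a e := fun hw => by simpa using hw
  obtain ⟨L, hL⟩ := exists_linearIsometry_eqOn_closedBall (T := fun w => T (a + w) - T a) he
    (by simp) (fun x hx y hy => by simp [hiso _ (hmem hx) _ (hmem hy)])
    (fun x hx y hy => by
      have hxy : a + midpoint ℝ x y = midpoint ℝ (a + x) (a + y) := by
        simp only [midpoint_eq_smul_add, invOf_eq_inv]; module
      rw [hxy, hmid _ (hmem hx) _ (hmem hy)]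
      simp only [midpoint_eq_smul_add, invOf_eq_inv]
      module)
  refine ⟨L, fun x hx => ?_⟩
  rw [hL (by simpa [dist_eq_norm] using hx)]
  dsimp only
  rw [add_sub_cancel]

theorem LinearMap.surjective_of_closedBall_subset_range {L : X →ₗ[ℝ] Y} (he : 0 < e)
    (hL : closedBall 0 e ⊆ Set.range L) : Function.Surjective L := by
  have h0 : (0 : Y) ∈ interior (ball 0 e) := by rw [isOpen_ball.interior_eq]; exact mem_ball_self he
  rw [← LinearMap.range_eq_top]
  refine Submodule.eq_top_of_nonempty_interior' _ ⟨0, interior_mono ?_ h0⟩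
  rw [LinearMap.coe_range]
  exact ball_subset_closedBall.trans hL

theorem exists_affineIsometryEquiv_eqOn_closedBall {B : Set X} {C : Set Y} {f : X → Y}
    (hf : BijOn f B C) (hiso : ∀ x ∈ B, ∀ y ∈ B, dist (f x) (f y) = dist x y)
    {a : X} {r : ℝ} (hr : 0 < r) (haB : closedBall a r ⊆ B) (hfaC : closedBall (f a) r ⊆ C) :
    ∃ g : X ≃ᵃⁱ[ℝ] Y, EqOn g f (closedBall a (r / 4)) := by
  have hsub : closedBall a (r / 4) ⊆ B := (closedBall_subset_closedBall (by linarith)).trans haB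
  have haB' : a ∈ B := haB (mem_closedBall_self hr.le)
  have himage : ∀ {u}, u ∈ closedBall a (r / 4) → f u ∈ closedBall (f a) (r / 4) := fun hu => by
    rwa [mem_closedBall, hiso _ (hsub hu) _ haB']
  have h3r : 3 * (r / 4) ≤ r := by linarith
  obtain ⟨L, hL⟩ := exists_linearIsometry_map_sub_eq (T := f) (by positivity)
    (fun x hx y hy => hiso x (hsub hx) y (hsub hy))
    (fun u hu v hv => map_midpoint_of_lens_subset hf hiso
      ((lens_subset_closedBall hu hv).trans ((closedBall_subset_closedBall h3r).trans haB))
      ((lens_subset_closedBall (himage hu) (himage hv)).trans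
        ((closedBall_subset_closedBall h3r).trans hfaC)))
  have hLsurj : Function.Surjective L := by
    refine LinearMap.surjective_of_closedBall_subset_range (e := r / 4) (by positivity) ?_
    intro w hw
    have hw' : f a + w ∈ closedBall (f a) (r / 4) := by simpa using hw
    obtain ⟨x, hx, hfx⟩ := hf.surjOn (hfaC (closedBall_subset_closedBall (by linarith) hw'))
    have hxa : x ∈ closedBall a (r / 4) := by
      rw [mem_closedBall, ← hiso x hx a haB', hfx]
      simpa using hw
    exact ⟨x - a, (hL x hxa).trans (by rw [hfx, add_sub_cancel_left])⟩
  refine ⟨(AffineIsometryEquiv.vaddConst ℝ a).symm.trans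
    ((LinearIsometryEquiv.ofSurjective L hLsurj).toAffineIsometryEquiv.trans
      (AffineIsometryEquiv.vaddConst ℝ (f a))), fun x hx => ?_⟩
  simp [hL x hx]

theorem AffineIsometryEquiv.eqOn_of_eqOn_closedBall (g : X ≃ᵃⁱ[ℝ] Y) {B : Set X} {f : X → Y}
    (hB : Convex ℝ B) (hiso : ∀ x ∈ B, ∀ y ∈ B, dist (f x) (f y) = dist x y) {a : X}
    (he : 0 < e) (haB : closedBall a e ⊆ B) (hg : EqOn g f (closedBall a e)) :
    EqOn g f B := by
  have hid := eqOn_id_of_eqOn_id_closedBall hB (F := g.symm ∘ f)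
    (fun x hx y hy => by simp [hiso x hx y hy]) he haB
    (fun x hx => by simp [← hg hx])
  exact fun x hx => (g.symm_apply_eq.1 (hid hx)).symm

end NormedSpace

theorem mankiewicz_extension_general {X Y : Type*}
    [NormedAddCommGroup X] [NormedSpace ℝ X]
    [NormedAddCommGroup Y] [NormedSpace ℝ Y]
    (B : Set X) (C : Set Y) (hBc : Convex ℝ B)
    (hBi : (interior B).Nonempty)
    (hCi : (interior C).Nonempty) (f : X → Y)
    (hmaps : Set.MapsTo f B C) (hinj : Set.InjOn f B) (hsurj : Set.SurjOn f B C)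
    (hiso : ∀ x ∈ B, ∀ y ∈ B, ‖f x - f y‖ = ‖x - y‖) :
    (∃ g : X ≃ᵃⁱ[ℝ] Y, Set.EqOn (⇑g) f B) ∧
      ((0 ∈ B ∧ f 0 = 0) → ∃ h : X ≃ₗᵢ[ℝ] Y, Set.EqOn (⇑h) f B) := by
  have hdist : ∀ x ∈ B, ∀ y ∈ B, dist (f x) (f y) = dist x y := by
    simpa only [dist_eq_norm] using hiso
  obtain ⟨a, r, hr, haB, hfaC⟩ := exists_closedBall_subset_and_closedBall_image_subset hBc hBi hCi
    hsurj (continuousOn_of_forall_dist_eq hdist)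
  obtain ⟨g, hg⟩ :=
    exists_affineIsometryEquiv_eqOn_closedBall ⟨hmaps, hinj, hsurj⟩ hdist hr haB hfaC
  have hgf : EqOn g f B := g.eqOn_of_eqOn_closedBall hBc hdist (by positivity)
    ((closedBall_subset_closedBall (by linarith)).trans haB) hg
  refine ⟨⟨g, hgf⟩, fun ⟨h0B, hf0⟩ => ⟨g.linearIsometryEquiv, fun x hx => ?_⟩⟩
  have hlin : g x = g.linearIsometryEquiv x + g 0 := by simpa using g.map_vadd 0 x
  rw [hgf h0B, hf0, add_zero] at hlin
  rw [← hgf hx, hlin]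

/-- Mankiewicz's theorem: a surjective isometry between closed convex subsets with nonempty
interior of real Banach spaces extends to a bijective affine isometry; if moreover `0 ∈ B`
and `f 0 = 0`, the extension can be taken to be a surjective linear isometry. -/
theorem mankiewicz_extension {X Y : Type*}
    [NormedAddCommGroup X] [NormedSpace ℝ X] [CompleteSpace X]
    [NormedAddCommGroup Y] [NormedSpace ℝ Y] [CompleteSpace Y]
    (B : Set X) (C : Set Y) (hB : IsClosed B) (hBc : Convex ℝ B)
    (hBi : (interior B).Nonempty) (hC : IsClosed C) (hCc : Convex ℝ C)
    (hCi : (interior C).Nonempty) (f : X → Y)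
    (hmaps : Set.MapsTo f B C) (hinj : Set.InjOn f B) (hsurj : Set.SurjOn f B C)
    (hiso : ∀ x ∈ B, ∀ y ∈ B, ‖f x - f y‖ = ‖x - y‖) :
    (∃ g : X ≃ᵃⁱ[ℝ] Y, Set.EqOn (⇑g) f B) ∧
      ((0 ∈ B ∧ f 0 = 0) → ∃ h : X ≃ₗᵢ[ℝ] Y, Set.EqOn (⇑h) f B) :=
  mankiewicz_extension_general B C hBc hBi hCi f hmaps hinj hsurj hiso
end
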